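/- arXiv:math/0212244 — 10 statements merged into one kernel-verified Lean document; each statement's English description precedes it below -/
import Mathlib

section
/- Let n ≥ 2 and let f, g : Fin (n+1) → EuclideanSpace ℝ (Fin (n+1)) be two linearly independent families of unit vectors whose inner-product patterns are both a cycle: for all i ≠ j, ⟪f i, f j⟫ ≠ 0 if and only if j = i + 1 or i = j + 1 (mod n+1), and the same for g. Suppose moreover that |⟪f i, f j⟫| = |⟪g i, g j⟫| for all i, j, and that every nonzero value |⟪f i, f j⟫| (i ≠ j) lies in {1/2, √2/2}. Then there exists a sign function ε : Fin (n+1) → {−1, 1} such that ⟪g i, g j⟫ = ε i · ε j · ⟪f i, f j⟫ for all i, j; in particular the two families of simplices determined by the hyperplanes orthogonal to the f i and to the g i coincide up to a linear isometry. -/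
/-!
Write `c i = ⟪f i, f (i + 1)⟫`. As the Gram matrix is supported on the cycle,
`‖∑ x i • f i‖² = ∑ x i ^ 2 + 2 ∑ x i x (i + 1) c i`. If the signs `-c i / |c i|` multiplied to `1`
around the cycle, they would be of the form `x i x (i + 1)` with `x i = ±1`, making every
`x i x (i + 1) c i = -|c i| ≤ -1/2` and the norm `≤ 0`, against linear independence. So this sign
product is `-1` for `f` and for `g` alike. Hence, with `d i = ⟪g i, g (i + 1)⟫`, the ratios
`d i / c i = ±1` multiply to `1`, so they are of the form `ε i ε (i + 1)`, and this `ε` is the sign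
function sought.
-/

open scoped RealInnerProductSpace

namespace Fin

variable {M : Type*} [CommMonoid M] {n : ℕ}

theorem partialProd_last (t : Fin n → M) : partialProd t (last n) = ∏ i, t i := by
  rw [partialProd, val_last, List.take_of_length_le (by simp), List.prod_ofFn]

theorem partialProd_castSucc_add_one {t : Fin (n + 1) → M} (ht : ∏ i, t i = 1) (i : Fin (n + 1)) :
    partialProd t (i + 1).castSucc = partialProd t i.castSucc * t i := by
  cases i using lastCases with
  | last => rw [last_add_one, castSucc_zero, partialProd_zero, ← partialProd_succ, succ_last,
      partialProd_last, ht]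
  | cast j => rw [coeSucc_eq_succ, ← succ_castSucc, partialProd_succ]

theorem partialProd_mul_self {t : Fin n → M} (ht : ∀ i, t i * t i = 1) (k : Fin (n + 1)) :
    partialProd t k * partialProd t k = 1 := by
  induction k using inductionOn with
  | zero => simp
  | succ j ih =>
    rw [partialProd_succ, mul_mul_mul_comm, ih, ht, one_mul]

theorem exists_mul_add_one_eq_of_prod_eq_one {t : Fin (n + 1) → M} (ht : ∀ i, t i * t i = 1)
    (hprod : ∏ i, t i = 1) :
    ∃ ε : Fin (n + 1) → M, (∀ i, ε i * ε i = 1) ∧ ∀ i, ε i * ε (i + 1) = t i := by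
  refine ⟨fun i => partialProd t i.castSucc, fun i => partialProd_mul_self ht _, fun i => ?_⟩
  dsimp only
  rw [partialProd_castSucc_add_one hprod, ← mul_assoc, partialProd_mul_self ht, one_mul]

theorem sub_one_ne_add_one (hn : 2 ≤ n) (i : Fin (n + 1)) : i - 1 ≠ i + 1 := by
  have h2 : (2 : Fin (n + 1)) ≠ 0 := by
    rw [ne_eq, Fin.ext_iff, coe_ofNat_eq_mod, Nat.mod_eq_of_lt (by omega)]
    simp
  intro h
  apply h2
  open Fin.CommRing in linear_combination h.symm

theorem self_ne_add_one (hn : 1 ≤ n) (i : Fin (n + 1)) : i ≠ i + 1 := by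
  rw [ne_eq, left_eq_add, one_eq_zero_iff]
  omega

end Fin

variable {E : Type*} [NormedAddCommGroup E] [InnerProductSpace ℝ E] {n : ℕ}

def InnerSupportedOnCycle (h : Fin (n + 1) → E) : Prop :=
  ∀ i j, ⟪h i, h j⟫ ≠ 0 → i = j ∨ j = i + 1 ∨ i = j + 1

theorem innerSupportedOnCycle_of_forall_ne {h : Fin (n + 1) → E}
    (hcyc : ∀ i j, i ≠ j → ⟪h i, h j⟫ ≠ 0 → j = i + 1 ∨ i = j + 1) : InnerSupportedOnCycle h :=
  fun i j hij => (eq_or_ne i j).imp_right fun hne => hcyc i j hne hij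

theorem sum_mul_mul_inner_eq_of_cycle (hn : 2 ≤ n) {h : Fin (n + 1) → E}
    (hsupp : InnerSupportedOnCycle h) (x : Fin (n + 1) → ℝ) (i : Fin (n + 1)) :
    ∑ j, x i * x j * ⟪h i, h j⟫ = x (i - 1) * x i * ⟪h (i - 1), h i⟫ + x i ^ 2 * ‖h i‖ ^ 2 +
      x i * x (i + 1) * ⟪h i, h (i + 1)⟫ := by
  have hzero : ∀ j ∈ Finset.univ, j ∉ ({i - 1, i, i + 1} : Finset _) →
      x i * x j * ⟪h i, h j⟫ = 0 := by
    intro j _ hj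
    simp only [Finset.mem_insert, Finset.mem_singleton, not_or] at hj
    have : ⟪h i, h j⟫ = 0 := by
      by_contra hne
      rcases hsupp i j hne with rfl | rfl | rfl
      exacts [hj.2.1 rfl, hj.2.2 rfl, hj.1 (add_sub_cancel_right j 1).symm]
    rw [this, mul_zero]
  rw [← Finset.sum_subset (Finset.subset_univ _) hzero, Finset.sum_insert, Finset.sum_insert,
    Finset.sum_singleton, real_inner_self_eq_norm_sq, real_inner_comm (h i)]
  · ring
  · simpa using Fin.self_ne_add_one (by omega) i
  · have hsub : i - 1 ≠ i := fun heq =>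
      Fin.self_ne_add_one (by omega) (i - 1) (by rw [sub_add_cancel, heq])
    simp only [Finset.mem_insert, Finset.mem_singleton, not_or]
    exact ⟨hsub, Fin.sub_one_ne_add_one hn i⟩

theorem norm_sum_smul_sq_of_cycle (hn : 2 ≤ n) {h : Fin (n + 1) → E}
    (hsupp : InnerSupportedOnCycle h) (x : Fin (n + 1) → ℝ) :
    ‖∑ i, x i • h i‖ ^ 2 =
      ∑ i, x i ^ 2 * ‖h i‖ ^ 2 + 2 * ∑ i, x i * x (i + 1) * ⟪h i, h (i + 1)⟫ := by
  have hshift : ∑ i, x (i - 1) * x i * ⟪h (i - 1), h i⟫ =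
      ∑ i, x i * x (i + 1) * ⟪h i, h (i + 1)⟫ :=
    Fintype.sum_equiv (Equiv.subRight 1) _ _ fun i => by
      simp only [Equiv.subRight_apply, sub_add_cancel]
  rw [← real_inner_self_eq_norm_sq, sum_inner]
  simp_rw [inner_sum, real_inner_smul_left, real_inner_smul_right, ← mul_assoc]
  rw [Finset.sum_congr rfl fun i _ => sum_mul_mul_inner_eq_of_cycle hn hsupp x i,
    Finset.sum_add_distrib, Finset.sum_add_distrib, hshift]
  ring

theorem not_forall_mul_inner_le_of_cycle (hn : 2 ≤ n) {h : Fin (n + 1) → E}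
    (hli : LinearIndependent ℝ h) (hunit : ∀ i, ‖h i‖ = 1)
    (hsupp : InnerSupportedOnCycle h) {x : Fin (n + 1) → ℝ}
    (hx : ∀ i, x i * x i = 1) : ¬ ∀ i, x i * x (i + 1) * ⟪h i, h (i + 1)⟫ ≤ -1 / 2 := by
  intro hneg
  have hle : ‖∑ i, x i • h i‖ ^ 2 ≤ 0 := by
    have hedges := Finset.sum_le_sum fun i (_ : i ∈ Finset.univ) => hneg i
    simp only [Finset.sum_const, Finset.card_univ, Fintype.card_fin, nsmul_eq_mul] at hedges
    rw [norm_sum_smul_sq_of_cycle hn hsupp]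
    simp only [hunit, mul_one, sq, hx, Finset.sum_const, Finset.card_univ,
      Fintype.card_fin, nsmul_eq_mul]
    linarith
  have hzero : ∑ i, x i • h i = 0 :=
    norm_eq_zero.mp <| (pow_eq_zero_iff two_ne_zero).mp (le_antisymm hle (sq_nonneg _))
  have hx0 := hx 0
  rw [Fintype.linearIndependent_iff.mp hli x hzero 0, mul_zero] at hx0
  exact zero_ne_one hx0

theorem prod_neg_div_abs_inner_eq_neg_one_of_cycle (hn : 2 ≤ n) {h : Fin (n + 1) → E}
    (hli : LinearIndependent ℝ h) (hunit : ∀ i, ‖h i‖ = 1)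
    (hsupp : InnerSupportedOnCycle h) (hbound : ∀ i, 1 / 2 ≤ |⟪h i, h (i + 1)⟫|) :
    ∏ i, -⟪h i, h (i + 1)⟫ / |⟪h i, h (i + 1)⟫| = -1 := by
  set c := fun i => ⟪h i, h (i + 1)⟫
  set s := fun i => -c i / |c i|
  have hc : ∀ i, |c i| ≠ 0 := fun i => (lt_of_lt_of_le (by norm_num) (hbound i)).ne'
  have hs : ∀ i, s i * s i = 1 := fun i => by
    rw [div_mul_div_comm, neg_mul_neg, ← abs_mul_abs_self, div_self (mul_ne_zero (hc i) (hc i))]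
  have hprod_sq : (∏ i, s i) * ∏ i, s i = 1 := by
    rw [← Finset.prod_mul_distrib, Finset.prod_eq_one fun i _ => hs i]
  refine (mul_self_eq_one_iff.mp hprod_sq).resolve_left fun hprod => ?_
  obtain ⟨x, hx, hxs⟩ := Fin.exists_mul_add_one_eq_of_prod_eq_one hs hprod
  refine not_forall_mul_inner_le_of_cycle hn hli hunit hsupp hx fun i => ?_
  have hsc : s i * c i = -|c i| := by
    rw [div_mul_eq_mul_div, neg_mul, ← abs_mul_abs_self, neg_div, mul_div_assoc, div_self (hc i),
      mul_one]
  rw [hxs, hsc]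
  linarith [hbound i]

theorem inner_eq_mul_mul_inner_of_cycle {f g : Fin (n + 1) → E}
    (hf_unit : ∀ i, ‖f i‖ = 1) (hg_unit : ∀ i, ‖g i‖ = 1)
    (hf_supp : InnerSupportedOnCycle f) (hg_supp : InnerSupportedOnCycle g)
    {ε : Fin (n + 1) → ℝ} (hε : ∀ i, ε i * ε i = 1)
    (hedge : ∀ i, ⟪g i, g (i + 1)⟫ = ε i * ε (i + 1) * ⟪f i, f (i + 1)⟫) (i j : Fin (n + 1)) :
    ⟪g i, g j⟫ = ε i * ε j * ⟪f i, f j⟫ := by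
  by_cases hadj : i = j ∨ j = i + 1 ∨ i = j + 1
  · rcases hadj with rfl | rfl | rfl
    · rw [real_inner_self_eq_norm_sq, real_inner_self_eq_norm_sq, hf_unit, hg_unit, hε]
      norm_num
    · exact hedge i
    · rw [real_inner_comm, hedge j, real_inner_comm (f j)]
      ring
  · rw [not_imp_comm.mp (hf_supp i j) hadj, not_imp_comm.mp (hg_supp i j) hadj, mul_zero]

/-- A spherical family diagram which is a cycle determines at most one family of
spherical simplices: two cyclic systems of unit normals with the same unsigned
Gram matrix (entries `1/2` or `√2/2`) agree up to signs. -/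
theorem cycle_diagram_unique_family {n : ℕ} (hn : 2 ≤ n)
    (f g : Fin (n + 1) → EuclideanSpace ℝ (Fin (n + 1)))
    (hf_li : LinearIndependent ℝ f) (hg_li : LinearIndependent ℝ g)
    (hf_unit : ∀ i, ‖f i‖ = 1) (hg_unit : ∀ i, ‖g i‖ = 1)
    (hf_cyc : ∀ i j, i ≠ j → (⟪f i, f j⟫ ≠ 0 ↔ (j = i + 1 ∨ i = j + 1)))
    (hg_cyc : ∀ i j, i ≠ j → (⟪g i, g j⟫ ≠ 0 ↔ (j = i + 1 ∨ i = j + 1)))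
    (habs : ∀ i j, |⟪f i, f j⟫| = |⟪g i, g j⟫|)
    (hval : ∀ i j, i ≠ j → ⟪f i, f j⟫ ≠ 0 →
      |⟪f i, f j⟫| ∈ ({1 / 2, Real.sqrt 2 / 2} : Set ℝ)) :
    ∃ ε : Fin (n + 1) → ℝ, (∀ i, ε i = 1 ∨ ε i = -1) ∧
      ∀ i j, ⟪g i, g j⟫ = ε i * ε j * ⟪f i, f j⟫ := by
  have hf_supp := innerSupportedOnCycle_of_forall_ne fun i j hij => (hf_cyc i j hij).mp
  have hg_supp := innerSupportedOnCycle_of_forall_ne fun i j hij => (hg_cyc i j hij).mp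
  set c := fun i => ⟪f i, f (i + 1)⟫
  set d := fun i => ⟪g i, g (i + 1)⟫
  have hc : ∀ i, c i ≠ 0 := fun i =>
    (hf_cyc i (i + 1) (Fin.self_ne_add_one (by omega) i)).mpr (.inl rfl)
  have hf_bound : ∀ i, 1 / 2 ≤ |c i| := fun i => by
    rcases hval i (i + 1) (Fin.self_ne_add_one (by omega) i) (hc i) with h | h <;> rw [h]
    linarith [Real.one_le_sqrt.mpr one_le_two]
  have hcd : ∀ i, |d i| = |c i| := fun i => (habs i (i + 1)).symm
  have hg_bound : ∀ i, 1 / 2 ≤ |d i| := fun i => (hcd i).symm ▸ hf_bound i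
  have hratio : ∀ i, d i / c i = (-d i / |d i|) / (-c i / |c i|) := fun i => by
    rw [hcd]
    field_simp [hc i]
  have hprod : ∏ i, d i / c i = 1 := by
    rw [Finset.prod_congr rfl fun i _ => hratio i, Finset.prod_div_distrib,
      prod_neg_div_abs_inner_eq_neg_one_of_cycle hn hf_li hf_unit hf_supp hf_bound,
      prod_neg_div_abs_inner_eq_neg_one_of_cycle hn hg_li hg_unit hg_supp hg_bound, div_self]
    norm_num
  have hratio_sq : ∀ i, d i / c i * (d i / c i) = 1 := fun i => by
    rw [div_mul_div_comm, ← abs_mul_abs_self (d i), hcd, abs_mul_abs_self,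
      div_self (mul_self_ne_zero.mpr (hc i))]
  obtain ⟨ε, hε, hεt⟩ := Fin.exists_mul_add_one_eq_of_prod_eq_one hratio_sq hprod
  refine ⟨ε, fun i => mul_self_eq_one_iff.mp (hε i),
    inner_eq_mul_mul_inner_of_cycle hf_unit hg_unit hf_supp hg_supp hε fun i => ?_⟩
  rw [hεt, div_mul_cancel₀ _ (hc i)]
end

section
/- Let f, g, h : Fin 4 → EuclideanSpace ℝ (Fin 4) be three linearly independent families of unit vectors such that: (1) for all i ≠ j, |⟪f i, f j⟫| = |⟪g i, g j⟫| = |⟪h i, h j⟫| and |⟪f i, f j⟫| ∈ {0, 1/2, (1+√5)/4, (√5−1)/4}; (2) for each of the three families, the subgroup of linear isometries of EuclideanSpace ℝ (Fin 4) generated by the reflections in its four vectors is finite; (3) the graph on Fin 4 in which i and j are adjacent iff i ≠ j and ⟪f i, f j⟫ ≠ 0 is a cycle on 4 vertices. Then at least two of the three families are sign-equivalent: there exist two of them, say u and w, and a sign function ε : Fin 4 → {−1, 1} with ⟪w i, w j⟫ = ε i · ε j · ⟪u i, u j⟫ for all i, j. (Equivalently, a cyclic family diagram on 4 vertices corresponds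 to at most two families of spherical simplices generating a finite reflection group.) -/
open scoped RealInnerProductSpace

/-- The graph whose vertices are the members of the family `f`, two of them being
adjacent iff they are not orthogonal. -/
def gramGraph {E : Type*} [NormedAddCommGroup E] [InnerProductSpace ℝ E]
    {ι : Type*} (f : ι → E) : SimpleGraph ι where
  Adj i j := i ≠ j ∧ ⟪f i, f j⟫ ≠ 0
  symm := by
    constructor
    intro i j h
    exact ⟨h.1.symm, by rw [real_inner_comm]; exact h.2⟩
  loopless := ⟨fun i h => h.1 rfl⟩

/-- The reflection in the hyperplane orthogonal to a vector `v`. -/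
noncomputable def reflIn {m : ℕ} (v : EuclideanSpace ℝ (Fin m)) :
    EuclideanSpace ℝ (Fin m) ≃ₗᵢ[ℝ] EuclideanSpace ℝ (Fin m) :=
  Submodule.reflection (ℝ ∙ v)ᗮ

/-- Two families of unit normals are sign-equivalent if their Gram matrices agree
after multiplying each vector by a sign. -/
def SignEquiv {d m : ℕ} (u w : Fin d → EuclideanSpace ℝ (Fin m)) : Prop :=
  ∃ ε : Fin d → ℝ, (∀ i, ε i = 1 ∨ ε i = -1) ∧
    ∀ i j, ⟪w i, w j⟫ = ε i * ε j * ⟪u i, u j⟫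

/-! Changing the signs of some vectors of a family does not change the sign of the product of
the inner products around the 4-cycle. Conversely, if two families have Gram matrices that agree
up to sign and vanish off the cycle, and their cycle products have the same sign, then the
ratios of their inner products along the edges of the cycle multiply to `1`. Such ratios are of
the form `ε k * ε (k + 1)` for some signs `ε`, so the families are sign-equivalent. The three
cycle products are nonzero, so two of them have the same sign. -/

theorem Fin.exists_mul_add_one_eq_of_prod_eq_one_s3 {M : Type*} [CommMonoid M] {n : ℕ} [NeZero n]
    {σ : Fin n → M} (hσ : ∀ k, σ k * σ k = 1) (hprod : ∏ k, σ k = 1) :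
    ∃ ε : Fin n → M, (∀ k, ε k * ε k = 1) ∧ ∀ k, ε k * ε (k + 1) = σ k := by
  set s : ℕ → M := fun i => if h : i < n then σ ⟨i, h⟩ else 1
  have hs : ∀ k : Fin n, s k = σ k := fun k => dif_pos k.isLt
  have hs_sq : ∀ i, s i * s i = 1 := fun i => by
    by_cases h : i < n <;> simp [s, h, hσ]
  let ε : Fin n → M := fun k => ∏ i ∈ Finset.range k, s i
  have hε_sq : ∀ k, ε k * ε k = 1 := fun k => by
    simp [ε, ← Finset.prod_mul_distrib, hs_sq]
  have hε_succ : ∀ k, ε (k + 1) = ε k * σ k := by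
    intro k
    simp only [ε, ← hs, ← Finset.prod_range_succ]
    obtain hk | hk : k.val + 1 < n ∨ k.val + 1 = n := by lia
    · rw [Fin.val_add_one_of_lt' hk]
    · have hk0 : k + 1 = 0 := by ext; simp [Fin.val_add, ← hk]
      rw [hk0, hk, Fin.val_zero, Finset.prod_range_zero, ← Fin.prod_univ_eq_prod_range]
      simp only [hs, hprod]
  refine ⟨ε, hε_sq, fun k => ?_⟩
  rw [hε_succ, ← mul_assoc, hε_sq, one_mul]

theorem exists_mul_self_eq_one_of_abs_eq {α : Type*} [Ring α] [LinearOrder α] [IsOrderedRing α]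
    {a b : α} (h : |a| = |b|) : ∃ s : α, s * s = 1 ∧ b = s * a := by
  rcases abs_eq_abs.mp h with h | h
  · exact ⟨1, one_mul 1, by rw [h, one_mul]⟩
  · exact ⟨-1, by simp, by rw [h]; simp⟩

theorem mul_pos_or_mul_pos_or_mul_pos {α : Type*} [Ring α] [LinearOrder α]
    [IsStrictOrderedRing α] {a b c : α} (ha : a ≠ 0) (hb : b ≠ 0) (hc : c ≠ 0) :
    0 < a * b ∨ 0 < a * c ∨ 0 < b * c := by
  rcases ha.lt_or_gt with ha | ha <;> rcases hb.lt_or_gt with hb | hb <;>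
    rcases hc.lt_or_gt with hc | hc <;> simp [mul_pos_iff, *]

open SimpleGraph

section GramGraph

variable {E ι : Type*} [NormedAddCommGroup E] [InnerProductSpace ℝ E]

theorem gramGraph_eq_of_abs_inner_eq {u w : ι → E}
    (habs : ∀ i j, |⟪u i, u j⟫| = |⟪w i, w j⟫|) : gramGraph u = gramGraph w := by
  ext i j
  simp only [gramGraph, ne_eq, ← abs_eq_zero (a := ⟪_, _⟫), habs]

theorem gramGraph_comp_iso_symm {κ : Type*} {G : SimpleGraph κ} {u : ι → E}
    (e : gramGraph u ≃g G) : gramGraph (u ∘ e.symm) = G := by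
  ext p q
  rw [← e.symm.map_adj_iff]
  exact and_congr_left' e.symm.injective.ne_iff.symm

theorem abs_inner_eq_of_norm_eq {u w : ι → E} (hnorm : ∀ i, ‖u i‖ = ‖w i‖)
    (habs : ∀ i j, i ≠ j → |⟪u i, u j⟫| = |⟪w i, w j⟫|) (i j : ι) :
    |⟪u i, u j⟫| = |⟪w i, w j⟫| := by
  obtain rfl | hij := eq_or_ne i j
  · simp only [real_inner_self_eq_norm_sq, hnorm]
  · exact habs i j hij

end GramGraph

noncomputable def cycleProduct {E : Type*} [NormedAddCommGroup E] [InnerProductSpace ℝ E]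
    {n : ℕ} [NeZero n] (u : Fin n → E) : ℝ :=
  ∏ k, ⟪u k, u (k + 1)⟫

theorem SignEquiv.of_comp_equiv {d m : ℕ} {u w : Fin d → EuclideanSpace ℝ (Fin m)}
    (v : Fin d ≃ Fin d) (h : SignEquiv (u ∘ v) (w ∘ v)) : SignEquiv u w := by
  obtain ⟨ε, hε, hεuw⟩ := h
  refine ⟨ε ∘ v.symm, fun i => hε _, fun i j => ?_⟩
  simpa using hεuw (v.symm i) (v.symm j)

section Cycle

variable {n m : ℕ} {u w : Fin (n + 2) → EuclideanSpace ℝ (Fin m)}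

theorem cycleProduct_ne_zero (hu : cycleGraph (n + 2) ≤ gramGraph u) : cycleProduct u ≠ 0 :=
  Finset.prod_ne_zero_iff.mpr fun k _ => (hu (by simp [cycleGraph_adj])).2

theorem signEquiv_of_cycleProduct_mul_pos (habs : ∀ i j, |⟪u i, u j⟫| = |⟪w i, w j⟫|)
    (hu : gramGraph u ≤ cycleGraph (n + 2)) (hpos : 0 < cycleProduct u * cycleProduct w) :
    SignEquiv u w := by
  choose σ hσ hσuw using fun k : Fin (n + 2) =>
    exists_mul_self_eq_one_of_abs_eq (habs k (k + 1))
  have hprod : ∏ k, σ k = 1 := by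
    have hw : cycleProduct w = (∏ k, σ k) * cycleProduct u := by
      simp only [cycleProduct, hσuw, Finset.prod_mul_distrib]
    have hpos' : 0 < ∏ k, σ k := by
      rw [hw, mul_left_comm] at hpos
      exact pos_of_mul_pos_left hpos (mul_self_nonneg _)
    have hsq : (∏ k, σ k) * ∏ k, σ k = 1 := by
      rw [← Finset.prod_mul_distrib, Finset.prod_eq_one fun k _ => hσ k]
    exact (mul_self_eq_one_iff.mp hsq).resolve_right (by linarith)
  obtain ⟨ε, hε, hεσ⟩ := Fin.exists_mul_add_one_eq_of_prod_eq_one_s3 hσ hprod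
  refine ⟨ε, fun i => mul_self_eq_one_iff.mp (hε i), fun i j => ?_⟩
  by_cases hij : ⟪u i, u j⟫ = 0
  · rw [hij, mul_zero, ← abs_eq_zero, ← habs, hij, abs_zero]
  obtain rfl | hne := eq_or_ne i j
  · rw [hε, one_mul, ← abs_of_nonneg real_inner_self_nonneg, ← habs,
      abs_of_nonneg real_inner_self_nonneg]
  rcases cycleGraph_adj.mp (hu ⟨hne, hij⟩) with h | h <;>
    rw [sub_eq_iff_eq_add'] at h <;> subst h
  · rw [real_inner_comm (w _), real_inner_comm (u _), hσuw, ← hεσ, mul_comm (ε j)]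
  · rw [hσuw, hεσ]

end Cycle

theorem cycle4_at_most_two_families_general
    (f g h : Fin 4 → EuclideanSpace ℝ (Fin 4))
    (hf_unit : ∀ i, ‖f i‖ = 1) (hg_unit : ∀ i, ‖g i‖ = 1) (hh_unit : ∀ i, ‖h i‖ = 1)
    (habs_fg : ∀ i j, i ≠ j → |⟪f i, f j⟫| = |⟪g i, g j⟫|)
    (habs_fh : ∀ i j, i ≠ j → |⟪f i, f j⟫| = |⟪h i, h j⟫|)
    (hcyc : Nonempty (gramGraph f ≃g SimpleGraph.cycleGraph 4)) :
    SignEquiv f g ∨ SignEquiv f h ∨ SignEquiv g h := by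
  obtain ⟨e⟩ := hcyc
  let v : Fin 4 ≃ Fin 4 := e.symm.toEquiv
  have hfg := abs_inner_eq_of_norm_eq (fun i => (hf_unit i).trans (hg_unit i).symm) habs_fg
  have hfh := abs_inner_eq_of_norm_eq (fun i => (hf_unit i).trans (hh_unit i).symm) habs_fh
  have hgh i j : |⟪g i, g j⟫| = |⟪h i, h j⟫| := (hfg i j).symm.trans (hfh i j)
  have hcf : gramGraph (f ∘ v) = cycleGraph 4 := gramGraph_comp_iso_symm e
  have hcg : gramGraph (g ∘ v) = cycleGraph 4 :=
    (gramGraph_eq_of_abs_inner_eq fun i j => hfg (v i) (v j)).symm.trans hcf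
  have hch : gramGraph (h ∘ v) = cycleGraph 4 :=
    (gramGraph_eq_of_abs_inner_eq fun i j => hfh (v i) (v j)).symm.trans hcf
  rcases mul_pos_or_mul_pos_or_mul_pos (cycleProduct_ne_zero hcf.ge) (cycleProduct_ne_zero hcg.ge)
      (cycleProduct_ne_zero hch.ge) with hpos | hpos | hpos
  · exact .inl <| .of_comp_equiv v <|
      signEquiv_of_cycleProduct_mul_pos (fun i j => hfg (v i) (v j)) hcf.le hpos
  · exact .inr <| .inl <| .of_comp_equiv v <|
      signEquiv_of_cycleProduct_mul_pos (fun i j => hfh (v i) (v j)) hcf.le hpos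
  · exact .inr <| .inr <| .of_comp_equiv v <|
      signEquiv_of_cycleProduct_mul_pos (fun i j => hgh (v i) (v j)) hcg.le hpos

/-- A cyclic family diagram on 4 vertices (with dihedral angles of type `π/2`, `kπ/3`
or `kπ/5` and finite generated reflection groups) corresponds to at most two families
of spherical simplices: among any three families with this diagram, two are
sign-equivalent. -/
theorem cycle4_at_most_two_families
    (f g h : Fin 4 → EuclideanSpace ℝ (Fin 4))
    (hf_li : LinearIndependent ℝ f) (hg_li : LinearIndependent ℝ g)
    (hh_li : LinearIndependent ℝ h)
    (hf_unit : ∀ i, ‖f i‖ = 1) (hg_unit : ∀ i, ‖g i‖ = 1) (hh_unit : ∀ i, ‖h i‖ = 1)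
    (habs_fg : ∀ i j, i ≠ j → |⟪f i, f j⟫| = |⟪g i, g j⟫|)
    (habs_fh : ∀ i j, i ≠ j → |⟪f i, f j⟫| = |⟪h i, h j⟫|)
    (hval : ∀ i j, i ≠ j → |⟪f i, f j⟫| ∈
      ({0, 1 / 2, (1 + Real.sqrt 5) / 4, (Real.sqrt 5 - 1) / 4} : Set ℝ))
    (hf_fin : Finite ↥(Subgroup.closure (Set.range fun i => reflIn (f i))))
    (hg_fin : Finite ↥(Subgroup.closure (Set.range fun i => reflIn (g i))))
    (hh_fin : Finite ↥(Subgroup.closure (Set.range fun i => reflIn (h i))))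
    (hcyc : Nonempty (gramGraph f ≃g SimpleGraph.cycleGraph 4)) :
    SignEquiv f g ∨ SignEquiv f h ∨ SignEquiv g h :=
  cycle4_at_most_two_families_general f g h hf_unit hg_unit hh_unit habs_fg habs_fh hcyc
end

section
/- Let T₁ and T₂ be finite trees (connected acyclic simple graphs) with the same number of vertices. If the line graph of T₁ is isomorphic to the line graph of T₂, then T₁ is isomorphic to T₂. -/
/-!
Call the set of edges at a vertex its star. In a triangle-free graph, an edge meeting two distinct
edges at a common vertex `v` passes through `v`; so an isomorphism `φ` between line graphs of
triangle-free graphs maps the star of any vertex of degree at least two onto a star. The star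
`{vu}` of a leaf `v` goes to a star as well: if the star of `u` goes to the star of `w`, then
`φ (vu) = s(w, x)` and no other edge passes through `x`. Without isolated vertices or isolated
edges a vertex is determined by its star, so `φ` is induced by a bijection of vertices preserving
incidence, that is, by a graph isomorphism. Trees on at least three vertices are such graphs;
trees on at most two are complete.
-/

namespace SimpleGraph

variable {V W : Type*} {G : SimpleGraph V} {H : SimpleGraph W}

theorem CliqueFree.mem_of_lineGraph_adj (hG : G.CliqueFree 3) {e f g : G.edgeSet} (hef : e ≠ f)
    {v : V} (hve : v ∈ (e : Sym2 V)) (hvf : v ∈ (f : Sym2 V))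
    (hge : G.lineGraph.Adj g e) (hgf : G.lineGraph.Adj g f) : v ∈ (g : Sym2 V) := by
  classical
  by_contra hvg
  obtain ⟨-, a, hag, hae⟩ := lineGraph_adj_iff_exists.1 hge
  obtain ⟨-, b, hbg, hbf⟩ := lineGraph_adj_iff_exists.1 hgf
  have hva : v ≠ a := by rintro rfl; exact hvg hag
  have hvb : v ≠ b := by rintro rfl; exact hvg hbg
  have he : (e : Sym2 V) = s(v, a) := (Sym2.mem_and_mem_iff hva).1 ⟨hve, hae⟩
  have hf : (f : Sym2 V) = s(v, b) := (Sym2.mem_and_mem_iff hvb).1 ⟨hvf, hbf⟩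
  have hab : a ≠ b := by rintro rfl; exact hef (Subtype.ext (he.trans hf.symm))
  have hg : (g : Sym2 V) = s(a, b) := (Sym2.mem_and_mem_iff hab).1 ⟨hag, hbg⟩
  exact hG {v, a, b} (is3Clique_triple_iff.2
    ⟨G.mem_edgeSet.1 (he ▸ e.2), G.mem_edgeSet.1 (hf ▸ f.2), G.mem_edgeSet.1 (hg ▸ g.2)⟩)

theorem CliqueFree.mem_lineGraphIso_of_mem (hH : H.CliqueFree 3) (φ : G.lineGraph ≃g H.lineGraph)
    {e f g : G.edgeSet} (hef : e ≠ f) {v : V} {w : W} (hve : v ∈ (e : Sym2 V))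
    (hvf : v ∈ (f : Sym2 V)) (hwe : w ∈ (φ e : Sym2 W)) (hwf : w ∈ (φ f : Sym2 W))
    (hvg : v ∈ (g : Sym2 V)) : w ∈ (φ g : Sym2 W) := by
  obtain rfl | hge := eq_or_ne g e
  · exact hwe
  obtain rfl | hgf := eq_or_ne g f
  · exact hwf
  exact hH.mem_of_lineGraph_adj (φ.injective.ne hef) hwe hwf
    (φ.map_adj_iff.2 (lineGraph_adj_iff_exists.2 ⟨hge, v, hvg, hve⟩))
    (φ.map_adj_iff.2 (lineGraph_adj_iff_exists.2 ⟨hgf, v, hvg, hvf⟩))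

theorem exists_forall_mem_iff_of_ne (hG : G.CliqueFree 3) (hH : H.CliqueFree 3)
    (φ : G.lineGraph ≃g H.lineGraph) {v : V} {e f : G.edgeSet} (hef : e ≠ f)
    (hve : v ∈ (e : Sym2 V)) (hvf : v ∈ (f : Sym2 V)) :
    ∃ w, ∀ g : G.edgeSet, v ∈ (g : Sym2 V) ↔ w ∈ (φ g : Sym2 W) := by
  obtain ⟨hne, w, hwe, hwf⟩ := lineGraph_adj_iff_exists.1
    (φ.map_adj_iff.2 (lineGraph_adj_iff_exists.2 ⟨hef, v, hve, hvf⟩))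
  refine ⟨w, fun g => ⟨hH.mem_lineGraphIso_of_mem φ hef hve hvf hwe hwf, fun hwg => ?_⟩⟩
  simpa using hG.mem_lineGraphIso_of_mem φ.symm hne hwe hwf (by simpa using hve)
    (by simpa using hvf) hwg

theorem exists_forall_mem_iff_of_leaf (φ : G.lineGraph ≃g H.lineGraph) {v u : V}
    (huv : G.Adj v u) (hleaf : ∀ g : G.edgeSet, v ∈ (g : Sym2 V) → g = ⟨s(v, u), huv⟩) {w : W}
    (hw : ∀ g : G.edgeSet, u ∈ (g : Sym2 V) ↔ w ∈ (φ g : Sym2 W)) :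
    ∃ x, ∀ g : G.edgeSet, v ∈ (g : Sym2 V) ↔ x ∈ (φ g : Sym2 W) := by
  set e : G.edgeSet := ⟨s(v, u), huv⟩
  obtain ⟨x, hx⟩ := Sym2.mem_iff_exists.1 ((hw e).1 (Sym2.mem_mk_right v u))
  have hwx : w ≠ x := (H.mem_edgeSet.1 (hx ▸ (φ e).2)).ne
  have hxe : x ∈ (φ e : Sym2 W) := hx ▸ Sym2.mem_mk_right w x
  refine ⟨x, fun g => ⟨fun hvg => hleaf g hvg ▸ hxe, fun hxg => ?_⟩⟩
  by_contra hvg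
  have hge : g ≠ e := fun h => hvg (h ▸ Sym2.mem_mk_left v u)
  obtain ⟨-, y, hyg, hye⟩ := lineGraph_adj_iff_exists.1 (φ.map_adj_iff.1
    (lineGraph_adj_iff_exists.2 ⟨φ.injective.ne hge, x, hxg, hxe⟩))
  obtain rfl | rfl := Sym2.mem_iff.1 hye
  · exact hvg hyg
  · have hφg : (φ g : Sym2 W) = φ e :=
      ((Sym2.mem_and_mem_iff hwx).1 ⟨(hw g).1 hyg, hxg⟩).trans hx.symm
    exact hge (φ.injective (Subtype.ext hφg))

theorem exists_forall_mem_iff (hG : G.CliqueFree 3) (hH : H.CliqueFree 3)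
    (hGv : ∀ v, ∃ u, G.Adj v u) (hGe : ∀ e : G.edgeSet, ∃ f, G.lineGraph.Adj e f)
    (φ : G.lineGraph ≃g H.lineGraph) (v : V) :
    ∃ w, ∀ g : G.edgeSet, v ∈ (g : Sym2 V) ↔ w ∈ (φ g : Sym2 W) := by
  obtain ⟨u, huv⟩ := hGv v
  by_cases hleaf : ∀ g : G.edgeSet, v ∈ (g : Sym2 V) → g = ⟨s(v, u), huv⟩
  · obtain ⟨f, hef⟩ := hGe ⟨s(v, u), huv⟩
    obtain ⟨hne, y, hye, hyf⟩ := lineGraph_adj_iff_exists.1 hef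
    obtain rfl | rfl := Sym2.mem_iff.1 hye
    · exact absurd (hleaf f hyf).symm hne
    obtain ⟨w, hw⟩ := exists_forall_mem_iff_of_ne hG hH φ hne hye hyf
    exact exists_forall_mem_iff_of_leaf φ huv hleaf hw
  · push Not at hleaf
    obtain ⟨f, hvf, hfe⟩ := hleaf
    exact exists_forall_mem_iff_of_ne hG hH φ hfe.symm (Sym2.mem_mk_left v u) hvf

theorem eq_of_forall_mem_edge_iff (hGv : ∀ v, ∃ u, G.Adj v u)
    (hGe : ∀ e : G.edgeSet, ∃ f, G.lineGraph.Adj e f) {x y : V}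
    (h : ∀ e : G.edgeSet, x ∈ (e : Sym2 V) ↔ y ∈ (e : Sym2 V)) : x = y := by
  obtain ⟨a, hxa⟩ := hGv x
  obtain rfl | rfl := Sym2.mem_iff.1 ((h ⟨s(x, a), hxa⟩).1 (Sym2.mem_mk_left x a))
  · rfl
  obtain ⟨f, hef⟩ := hGe ⟨s(x, y), hxa⟩
  obtain ⟨hne, z, hze, hzf⟩ := lineGraph_adj_iff_exists.1 hef
  have hxyf : x ∈ (f : Sym2 V) ∧ y ∈ (f : Sym2 V) := by
    obtain rfl | rfl := Sym2.mem_iff.1 hze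
    · exact ⟨hzf, (h f).1 hzf⟩
    · exact ⟨(h f).2 hzf, hzf⟩
  exact absurd (Subtype.ext ((Sym2.mem_and_mem_iff hxa.ne).1 hxyf).symm) hne

theorem Adj.map_of_forall_mem {φ : G.edgeSet → H.edgeSet} {ψ : V → W} (hψ : Function.Injective ψ)
    (h : ∀ v (e : G.edgeSet), v ∈ (e : Sym2 V) → ψ v ∈ (φ e : Sym2 W)) {a b : V}
    (hab : G.Adj a b) : H.Adj (ψ a) (ψ b) := by
  have hφ : (φ ⟨s(a, b), hab⟩ : Sym2 W) = s(ψ a, ψ b) := (Sym2.mem_and_mem_iff (hψ.ne hab.ne)).1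
    ⟨h a _ (Sym2.mem_mk_left a b), h b _ (Sym2.mem_mk_right a b)⟩
  exact H.mem_edgeSet.1 (hφ ▸ (φ _).2)

def Iso.ofForallMemIff (φ : G.edgeSet ≃ H.edgeSet) (ψ : V ≃ W)
    (h : ∀ v (e : G.edgeSet), v ∈ (e : Sym2 V) ↔ ψ v ∈ (φ e : Sym2 W)) : G ≃g H where
  toEquiv := ψ
  map_rel_iff' {a b} := by
    refine ⟨fun hab => ?_, Adj.map_of_forall_mem ψ.injective fun v e => (h v e).1⟩
    simpa using Adj.map_of_forall_mem (φ := φ.symm) ψ.symm.injective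
      (fun w g hwg => by rwa [h, ψ.apply_symm_apply, φ.apply_symm_apply]) hab

theorem nonempty_iso_of_lineGraph_iso (hG : G.CliqueFree 3) (hH : H.CliqueFree 3)
    (hGv : ∀ v, ∃ u, G.Adj v u) (hGe : ∀ e : G.edgeSet, ∃ f, G.lineGraph.Adj e f)
    (hHv : ∀ v, ∃ u, H.Adj v u) (hHe : ∀ e : H.edgeSet, ∃ f, H.lineGraph.Adj e f)
    (φ : G.lineGraph ≃g H.lineGraph) : Nonempty (G ≃g H) := by
  choose ψ hψ using exists_forall_mem_iff hG hH hGv hGe φ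
  choose χ hχ using exists_forall_mem_iff hH hG hHv hHe φ.symm
  have hχψ (v : V) : χ (ψ v) = v := eq_of_forall_mem_edge_iff hGv hGe fun e => by
    rw [hψ v e, hχ (ψ v) (φ e), φ.symm_apply_apply]
  have hψχ (w : W) : ψ (χ w) = w := eq_of_forall_mem_edge_iff hHv hHe fun g => by
    rw [hχ w g, hψ (χ w) (φ.symm g), φ.apply_symm_apply]
  exact ⟨Iso.ofForallMemIff φ.toEquiv ⟨ψ, χ, hχψ, hψχ⟩ hψ⟩

theorem Connected.exists_lineGraph_adj [Fintype V] (hG : G.Connected) (hV : 2 < Fintype.card V)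
    (e : G.edgeSet) : ∃ f, G.lineGraph.Adj e f := by
  classical
  obtain ⟨⟨a, b⟩, hab⟩ := e
  obtain ⟨x, -, hx⟩ := Finset.exists_mem_notMem_of_card_lt_card
    ((Finset.card_le_two (a := a) (b := b)).trans_lt hV)
  obtain ⟨p⟩ := hG a x
  obtain ⟨d, -, hd, hd'⟩ := p.exists_boundary_dart {a, b} (by simp) (by simpa using hx)
  refine ⟨⟨d.edge, d.edge_mem⟩, lineGraph_adj_iff_exists.2 ⟨?_, d.fst, ?_, ?_⟩⟩
  · intro h
    apply hd'
    have hsnd : d.snd ∈ s(a, b) := by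
      rw [show s(a, b) = d.edge from congrArg Subtype.val h]
      simp [Dart.edge]
    simpa using hsnd
  · simpa using hd
  · simp [Dart.edge]

theorem Connected.eq_top_of_card_le_two [Fintype V] (hG : G.Connected) (hV : Fintype.card V ≤ 2) :
    G = ⊤ := by
  ext a b
  refine ⟨Adj.ne, fun hab => ?_⟩
  obtain ⟨p⟩ := hG a b
  have hp := p.adj_snd (p.not_nil_of_ne hab)
  have hb : p.snd = b := by
    by_contra hb
    exact hV.not_gt (Fintype.two_lt_card_iff.2 ⟨a, b, p.snd, hab, hp.ne, Ne.symm hb⟩)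
  exact hb ▸ hp

theorem Connected.nonempty_iso_of_lineGraph_iso [Fintype V] [Fintype W] (hG : G.Connected)
    (hH : H.Connected) (hG3 : G.CliqueFree 3) (hH3 : H.CliqueFree 3) (hV : 2 < Fintype.card V)
    (hW : 2 < Fintype.card W) (φ : G.lineGraph ≃g H.lineGraph) : Nonempty (G ≃g H) :=
  have : Nontrivial V := Fintype.one_lt_card_iff_nontrivial.1 (by omega)
  have : Nontrivial W := Fintype.one_lt_card_iff_nontrivial.1 (by omega)
  SimpleGraph.nonempty_iso_of_lineGraph_iso hG3 hH3 hG.preconnected.exists_adj_of_nontrivial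
    (hG.exists_lineGraph_adj hV) hH.preconnected.exists_adj_of_nontrivial
    (hH.exists_lineGraph_adj hW) φ

end SimpleGraph

/-- Two finite trees with the same number of vertices and isomorphic line graphs are
isomorphic. -/
theorem tree_of_lineGraph {V₁ V₂ : Type*} [Fintype V₁] [Fintype V₂]
    (T₁ : SimpleGraph V₁) (T₂ : SimpleGraph V₂)
    (hcard : Fintype.card V₁ = Fintype.card V₂)
    (h₁ : T₁.IsTree) (h₂ : T₂.IsTree)
    (hline : Nonempty (T₁.lineGraph ≃g T₂.lineGraph)) :
    Nonempty (T₁ ≃g T₂) := by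
  obtain ⟨φ⟩ := hline
  rcases le_or_gt (Fintype.card V₁) 2 with hV₁ | hV₁
  · rw [h₁.connected.eq_top_of_card_le_two hV₁,
      h₂.connected.eq_top_of_card_le_two (hcard ▸ hV₁)]
    exact ⟨.completeGraph (Fintype.equivOfCardEq hcard)⟩
  · exact h₁.connected.nonempty_iso_of_lineGraph_iso h₂.connected
      (h₁.isAcyclic.cliqueFree le_rfl) (h₂.isAcyclic.cliqueFree le_rfl) hV₁ (hcard ▸ hV₁) φ
end

section
/- Let G be a simple graph on the vertex set Fin (n+1), and for each edge of G choose one vector of the form e_i − e_j in EuclideanSpace ℝ (Fin (n+1)), where {i, j} is that edge and e_0, …, e_n is the standard orthonormal basis. Then this family of vectors (indexed by the edge set of G) is linearly independent if and only if G is acyclic. -/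
/-!
A graph is acyclic iff every edge is a bridge. If `{i, j}` is a bridge, the linear form taking
the value `1` on the basis vectors of the side of `i` and `0` elsewhere is `1` on `eᵢ - eⱼ` and
kills every other edge vector, which gives linear independence. If `{i, j}` is not a bridge, a
path from `i` to `j` avoiding it writes `eᵢ - eⱼ` as a telescoping sum of the other edge vectors.
-/

open Submodule

lemma linearIndependent_of_forall_exists_dual {ι R M : Type*} [Ring R] [AddCommGroup M]
    [Module R M] {v : ι → M}
    (h : ∀ i, ∃ φ : M →ₗ[R] R, φ (v i) = 1 ∧ ∀ j ≠ i, φ (v j) = 0) :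
    LinearIndependent R v := by
  classical
  rw [linearIndependent_iff']
  intro s g hg i hi
  obtain ⟨φ, hφi, hφ⟩ := h i
  have hφg := congrArg φ hg
  rw [map_sum, map_zero, Finset.sum_eq_single i (fun j _ hj => by simp [hφ j hj])
    (fun hi' => absurd hi hi')] at hφg
  simpa [hφi] using hφg

namespace SimpleGraph

variable {V R M : Type*} [Ring R] [AddCommGroup M] [Module R M] {G : SimpleGraph V}
  {vec : G.edgeSet → M}

lemma Reachable.sub_mem_span_edgeVectors {b : V → M}
    (hvec : ∀ e : G.edgeSet, ∃ i j, (e : Sym2 V) = s(i, j) ∧ vec e = b i - b j)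
    {H : SimpleGraph V} (hH : H ≤ G) {u v : V} (h : H.Reachable u v) :
    b u - b v ∈ span R (vec '' {e | (e : Sym2 V) ∈ H.edgeSet}) := by
  obtain ⟨p⟩ := h
  induction p with
  | nil => simp
  | @cons u x v hux p ih =>
    obtain ⟨i, j, hij, hv⟩ := hvec ⟨s(u, x), hH hux⟩
    have hmem : vec ⟨s(u, x), hH hux⟩ ∈ span R (vec '' {e | (e : Sym2 V) ∈ H.edgeSet}) :=
      subset_span ⟨_, hux, rfl⟩
    rw [← sub_add_sub_cancel _ (b x)]
    refine add_mem ?_ ih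
    rcases Sym2.eq_iff.mp hij with ⟨rfl, rfl⟩ | ⟨rfl, rfl⟩
    · rwa [← hv]
    · rw [← neg_sub, ← hv]
      exact neg_mem hmem

lemma isAcyclic_of_linearIndependent [Nontrivial R] {b : V → M}
    (hvec : ∀ e : G.edgeSet, ∃ i j, (e : Sym2 V) = s(i, j) ∧ vec e = b i - b j)
    (hli : LinearIndependent R vec) : G.IsAcyclic := by
  refine isAcyclic_iff_forall_isBridge.mpr fun e he => ?_
  obtain ⟨i, j, rfl, hv⟩ := hvec ⟨e, he⟩
  refine isBridge_iff.mpr fun hij => hli.notMem_span_image (s := {e | _}) ?_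
    (hv ▸ hij.sub_mem_span_edgeVectors hvec (deleteEdges_le _))
  simp

lemma linearIndependent_of_isAcyclic (b : Module.Basis V R M)
    (hvec : ∀ e : G.edgeSet, ∃ i j, (e : Sym2 V) = s(i, j) ∧ vec e = b i - b j)
    (hG : G.IsAcyclic) : LinearIndependent R vec := by
  classical
  refine linearIndependent_of_forall_exists_dual fun e => ?_
  obtain ⟨i, j, hij, hv⟩ := hvec e
  have hbridge := isBridge_iff.mp (hij ▸ isAcyclic_iff_forall_isBridge.mp hG e.2)
  set side : V → R := fun v => if (G.deleteEdges {s(i, j)}).Reachable i v then 1 else 0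
  refine ⟨b.constr ℕ side, by simp [hv, side, hbridge], fun e' he' => ?_⟩
  obtain ⟨i', j', hij', hv'⟩ := hvec e'
  have hadj : (G.deleteEdges {s(i, j)}).Adj i' j' := by
    refine (deleteEdges_adj ..).mpr ⟨by simpa [hij'] using e'.2, fun h => he' (Subtype.ext ?_)⟩
    rw [hij', hij, Set.mem_singleton_iff.mp h]
  have hside : side i' = side j' := by
    simp only [side, (⟨(·.trans hadj.reachable), (·.trans hadj.reachable.symm)⟩ :
      (G.deleteEdges {s(i, j)}).Reachable i i' ↔ _)]
  simp [hv', hside]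

end SimpleGraph

/-- For a simple graph `G` on `Fin (n+1)` and a choice of a vector `eᵢ - eⱼ` for each
edge `{i, j}` of `G`, the resulting family of vectors is linearly independent if and
only if `G` is acyclic. -/
theorem linearIndependent_edge_vectors_iff_acyclic {n : ℕ}
    (G : SimpleGraph (Fin (n + 1)))
    (vec : G.edgeSet → EuclideanSpace ℝ (Fin (n + 1)))
    (hvec : ∀ e : G.edgeSet, ∃ i j : Fin (n + 1),
      (e : Sym2 (Fin (n + 1))) = s(i, j) ∧
      vec e = EuclideanSpace.single i 1 - EuclideanSpace.single j 1) :
    LinearIndependent ℝ vec ↔ G.IsAcyclic :=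
  ⟨SimpleGraph.isAcyclic_of_linearIndependent hvec,
    SimpleGraph.linearIndependent_of_isAcyclic (EuclideanSpace.basisFun _ ℝ).toBasis
      (by simpa using hvec)⟩
end

section
/- Let f_1, …, f_n be linearly independent vectors in EuclideanSpace ℝ (Fin (n+1)), each of the form e_i − e_j for some i ≠ j (where e_0, …, e_n is the standard orthonormal basis). Then the subgroup of linear isometries of EuclideanSpace ℝ (Fin (n+1)) generated by the reflections in f_1, …, f_n equals the subgroup generated by all reflections in the vectors e_i − e_j, 0 ≤ i < j ≤ n, namely the group of all linear isometries permuting the coordinates. (The reflection group A_n has no proper reflection subgroups of maximal rank: any n linearly independent roots of A_n generate the full Weyl group of A_n.) -/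
/-!
The reflection in `eᵢ - eⱼ` is the coordinate transposition `(i j)`, so both sides are images of
subgroups of the symmetric group on `Fin (n + 1)`, the right-hand side of the whole group. It
remains to see that transpositions `(aₖ bₖ)` with linearly independent roots `e_{aₖ} - e_{bₖ}`
generate the symmetric group, i.e. act transitively. The indicator of an orbit and the all-ones
vector are both orthogonal to every root; the `n` independent roots leave a one-dimensional
orthogonal complement in dimension `n + 1`, so the indicator is a multiple of the all-ones vector
and the orbit is everything.
-/

open Submodule MulAction Module
open scoped InnerProductSpace

namespace EuclideanSpace
variable {ι : Type*} [Fintype ι]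

theorem inner_single_sub_single [DecidableEq ι] (i j : ι) (x : EuclideanSpace ℝ ι) :
    ⟪single i (1 : ℝ) - single j 1, x⟫_ℝ = x i - x j := by
  simp [inner_sub_left, inner_single_left]

noncomputable def coordPerm :
    Equiv.Perm ι →* (EuclideanSpace ℝ ι ≃ₗᵢ[ℝ] EuclideanSpace ℝ ι) where
  toFun σ := LinearIsometryEquiv.piLpCongrLeft 2 ℝ ℝ σ
  map_one' := rfl
  map_mul' _ _ := by ext; simp [LinearIsometryEquiv.piLpCongrLeft_apply]; rfl

theorem coordPerm_apply (σ : Equiv.Perm ι) (x : EuclideanSpace ℝ ι) (t : ι) :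
    coordPerm σ x t = x (σ.symm t) := rfl

end EuclideanSpace

open EuclideanSpace

theorem reflIn_apply {m : ℕ} (v x : EuclideanSpace ℝ (Fin m)) :
    reflIn v x = x - (2 * ⟪v, x⟫_ℝ / ⟪v, v⟫_ℝ) • v := by
  rw [reflIn, reflection_orthogonal_apply, reflection_singleton_apply, real_inner_self_eq_norm_sq]
  simp only [RCLike.ofReal_real_eq_id, id_eq, neg_sub]
  module

theorem reflIn_single_sub_single {m : ℕ} (i j : Fin m) :
    reflIn (single i (1 : ℝ) - single j 1) = coordPerm (Equiv.swap i j) := by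
  rcases eq_or_ne i j with rfl | hij
  · ext x t; simp [reflIn_apply, coordPerm_apply]
  ext x t
  rw [reflIn_apply, inner_single_sub_single, inner_single_sub_single, coordPerm_apply,
    Equiv.symm_swap]
  rcases eq_or_ne t i with rfl | hti
  · simp [hij]; ring
  rcases eq_or_ne t j with rfl | htj
  · simp [hij.symm]; ring
  · simp [Equiv.swap_apply_of_ne_of_ne hti htj, hti, htj]

section
variable {𝕜 E ι : Type*} [RCLike 𝕜] [NormedAddCommGroup E] [InnerProductSpace 𝕜 E]

theorem mem_orthogonal_span_range_iff {v : ι → E} {w : E} :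
    w ∈ (span 𝕜 (Set.range v))ᗮ ↔ ∀ i, ⟪v i, w⟫_𝕜 = 0 := by
  refine ⟨fun h i => inner_right_of_mem_orthogonal (subset_span (Set.mem_range_self i)) h,
    fun h => ?_⟩
  have : span 𝕜 (Set.range v) ≤ (𝕜 ∙ w)ᗮ :=
    span_le.2 (Set.range_subset_iff.2 fun i => mem_orthogonal_singleton_iff_inner_left.2 (h i))
  exact orthogonal_le this (le_orthogonal_orthogonal _ (mem_span_singleton_self w))

theorem finrank_orthogonal_span_range_eq_one [FiniteDimensional 𝕜 E] [Fintype ι] {v : ι → E}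
    (hv : LinearIndependent 𝕜 v) (hE : finrank 𝕜 E = Fintype.card ι + 1) :
    finrank 𝕜 (span 𝕜 (Set.range v))ᗮ = 1 := by
  have := (span 𝕜 (Set.range v)).finrank_add_finrank_orthogonal
  rw [finrank_span_eq_card hv, hE] at this
  omega
end

namespace Equiv.Perm
variable {α ι : Type*} [Fintype α] [DecidableEq α] [Fintype ι]

theorem isPretransitive_closure_swap_of_linearIndependent {a b : ι → α}
    (hcard : Fintype.card α = Fintype.card ι + 1)
    (hli : LinearIndependent ℝ fun k => (single (a k) 1 - single (b k) 1 : EuclideanSpace ℝ α)) :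
    IsPretransitive (Subgroup.closure (Set.range fun k => swap (a k) (b k))) α := by
  set H := Subgroup.closure (Set.range fun k => swap (a k) (b k))
  have horbit : ∀ k, orbit H (b k) = orbit H (a k) := fun k => by
    rw [← orbit_smul (⟨swap (a k) (b k), Subgroup.subset_closure ⟨k, rfl⟩⟩ : H) (a k)]
    simp [Subgroup.smul_def]
  refine ⟨fun p q => mem_orbit_iff.1 (orbit_eq_iff.1 ?_)⟩
  set K := span ℝ (Set.range fun k => (single (a k) 1 - single (b k) 1 : EuclideanSpace ℝ α))
  let χ : EuclideanSpace ℝ α := WithLp.toLp 2 fun t => if orbit H t = orbit H p then 1 else 0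
  let o : EuclideanSpace ℝ α := WithLp.toLp 2 fun _ => 1
  have hχ : χ ∈ Kᗮ := mem_orthogonal_span_range_iff.2 fun k => by
    simp [inner_single_sub_single, χ, horbit k]
  have ho : o ∈ Kᗮ := mem_orthogonal_span_range_iff.2 fun k => by
    simp [inner_single_sub_single, o]
  have hχ0 : (⟨χ, hχ⟩ : Kᗮ) ≠ 0 := fun h => by
    simpa [χ] using congr_arg (fun w : Kᗮ => (w : EuclideanSpace ℝ α) p) h
  obtain ⟨c, hc⟩ := (finrank_eq_one_iff_of_nonzero' _ hχ0).1
    (finrank_orthogonal_span_range_eq_one hli (by rw [finrank_euclideanSpace, hcard])) ⟨o, ho⟩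
  have hco : c • χ = o := congr_arg Subtype.val hc
  have hq : c * (if orbit H q = orbit H p then 1 else 0) = 1 :=
    congr_arg (fun w : EuclideanSpace ℝ α => w q) hco
  by_contra hqp
  simp [hqp] at hq

theorem closure_swap_eq_top_of_linearIndependent {a b : ι → α}
    (hcard : Fintype.card α = Fintype.card ι + 1)
    (hli : LinearIndependent ℝ fun k => (single (a k) 1 - single (b k) 1 : EuclideanSpace ℝ α)) :
    Subgroup.closure (Set.range fun k => swap (a k) (b k)) = ⊤ := by
  have := isPretransitive_closure_swap_of_linearIndependent hcard hli
  refine closure_of_isSwap_of_isPretransitive ?_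
  rintro _ ⟨k, rfl⟩
  refine ⟨a k, b k, fun hab => hli.ne_zero k ?_, rfl⟩
  simp [hab]

end Equiv.Perm

/-- `Aₙ` has no proper reflection subgroup of maximal rank: `n` linearly independent
roots of the form `eᵢ - eⱼ` generate, via the reflections in them, the same group as
all the reflections in the roots `eᵢ - eⱼ`, namely the group of coordinate
permutations. -/
theorem An_no_maximal_rank_subgroup {n : ℕ}
    (f : Fin n → EuclideanSpace ℝ (Fin (n + 1)))
    (hli : LinearIndependent ℝ f)
    (hform : ∀ k, ∃ i j : Fin (n + 1), i ≠ j ∧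
      f k = EuclideanSpace.single i 1 - EuclideanSpace.single j 1) :
    Subgroup.closure (Set.range fun k => reflIn (f k)) =
      Subgroup.closure {r | ∃ i j : Fin (n + 1), i ≠ j ∧
        r = reflIn (EuclideanSpace.single i (1 : ℝ) - EuclideanSpace.single j 1)} := by
  choose a b _ hf using hform
  have hroots : f = fun k => single (a k) 1 - single (b k) 1 := funext hf
  have hgens : (Set.range fun k => reflIn (f k)) =
      coordPerm '' Set.range fun k => Equiv.swap (a k) (b k) := by
    simp only [hroots, reflIn_single_sub_single, ← Set.range_comp, Function.comp_def]
  have hall : {r | ∃ i j : Fin (n + 1), i ≠ j ∧ r = reflIn (single i (1 : ℝ) - single j 1)} =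
      coordPerm '' {σ | σ.IsSwap} := by
    ext r
    simp [reflIn_single_sub_single, Equiv.Perm.IsSwap, eq_comm]
  rw [hgens, hall, ← MonoidHom.map_closure, ← MonoidHom.map_closure, Equiv.Perm.closure_isSwap,
    Equiv.Perm.closure_swap_eq_top_of_linearIndependent (by simp) (hroots ▸ hli)]
end

section
/- Let f, g : Fin n → EuclideanSpace ℝ (Fin (n+1)) be two linearly independent families of vectors, each vector of the form e_i − e_j for some i ≠ j (where e_0, …, e_n is the standard orthonormal basis). If |⟪f k, f l⟫| = |⟪g k, g l⟫| for all k, l, then there exist a permutation σ of Fin (n+1) and a sign function ε : Fin n → {−1, 1} such that g k = ε k · (σ applied coordinatewise to f k) for every k. (Every family of simplices generating A_n has a unique embedding into the root system of A_n up to the action of the Weyl group of A_n.) -/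
/-!
Write `e_i - e_j` as the edge `s(i, j)` on the vertex set `Fin (n + 1)`. A linearly independent
family of roots is a forest: a subfamily in which every vertex lies on two edges has at least as
many edges as vertices, yet it lies in the zero-sum hyperplane of the span of those vertices.
For distinct edges `|⟪e_a - e_b, e_c - e_d⟫|` is `1` if they share a vertex and `0` otherwise,
so the two families are forests with the same line graph. A forest has no triangles, and then
the line graph determines the forest up to a relabelling `σ` of the vertices (Whitney): remove a
leaf edge, relabel the rest by induction, and correct the relabelling by swapping vertices with
the same incidences. Finally `σ` maps `e_a - e_b` to `±(e_c - e_d)`.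
-/

open scoped RealInnerProductSpace Finset

namespace Sym2

variable {α β : Type*}

theorem apply_mem_map_iff {f : α → β} (hf : Function.Injective f) {a : α} {e : Sym2 α} :
    f a ∈ e.map f ↔ a ∈ e := by
  simp only [mem_map, hf.eq_iff, exists_eq_right]

theorem eq_of_mem_of_ne {e : Sym2 α} {v x y : α} (hv : v ∈ e) (hx : x ∈ e) (hy : y ∈ e)
    (hxv : x ≠ v) (hyv : y ≠ v) : x = y := by
  obtain rfl := (mem_and_mem_iff hxv).1 ⟨hx, hv⟩
  exact ((mem_iff.1 hy).resolve_right hyv).symm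

theorem map_swap_eq_self [DecidableEq α] {x y : α} {e : Sym2 α} (h : x ∈ e ↔ y ∈ e) :
    e.map (Equiv.swap x y) = e := by
  by_cases hxy : x = y
  · simp [hxy]
  by_cases hx : x ∈ e
  · obtain rfl := (mem_and_mem_iff hxy).1 ⟨hx, h.1 hx⟩
    simp [eq_swap]
  · have hfix : ∀ z ∈ e, Equiv.swap x y z = id z := fun z hz =>
      Equiv.swap_apply_of_ne_of_ne (by rintro rfl; exact hx hz) (by rintro rfl; exact hx (h.2 hz))
    rw [map_congr hfix, map_id, id]

end Sym2

/-- Acyclicity of a family of edges, phrased through leaves rather than cycles. -/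
def IsForest {ι α : Type*} (F : ι → Sym2 α) : Prop :=
  ∀ s : Finset ι, s.Nonempty → ∃ k ∈ s, ∃ v ∈ F k, ∀ l ∈ s, l ≠ k → v ∉ F l

namespace IsForest

variable {ι α : Type*} {F : ι → Sym2 α}

theorem injective (hF : IsForest F) : Function.Injective F := by
  classical
  intro k l hkl
  by_contra hne
  obtain ⟨j, hj, v, hv, hleaf⟩ := hF {k, l} (Finset.insert_nonempty k {l})
  simp only [Finset.mem_insert, Finset.mem_singleton] at hj
  rcases hj with rfl | rfl
  · exact hleaf l (by simp) (Ne.symm hne) (by rwa [← hkl])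
  · exact hleaf k (by simp) hne (by rwa [hkl])

/-- A forest has no triangles. -/
theorem mem_of_meets (hF : IsForest F) {k l j : ι} (hkl : k ≠ l) (hkj : k ≠ j) (hlj : l ≠ j)
    {x y z : α} (hxk : x ∈ F k) (hxl : x ∈ F l) (hyk : y ∈ F k) (hyj : y ∈ F j)
    (hzl : z ∈ F l) (hzj : z ∈ F j) : x ∈ F j := by
  classical
  obtain ⟨i, hi, v, hv, hleaf⟩ := hF {k, l, j} (Finset.insert_nonempty _ _)
  simp only [Finset.mem_insert, Finset.mem_singleton] at hi
  rcases hi with rfl | rfl | rfl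
  · have hvl := hleaf l (by simp) (Ne.symm hkl)
    have hvj := hleaf j (by simp) (Ne.symm hkj)
    rwa [Sym2.eq_of_mem_of_ne hv hxk hyk (by rintro rfl; exact hvl hxl)
      (by rintro rfl; exact hvj hyj)]
  · have hvk := hleaf k (by simp) hkl
    have hvj := hleaf j (by simp) (Ne.symm hlj)
    rwa [Sym2.eq_of_mem_of_ne hv hxl hzl (by rintro rfl; exact hvk hxk)
      (by rintro rfl; exact hvj hzj)]
  · have hvk := hleaf k (by simp) hkj
    have hvl := hleaf l (by simp) hlj
    have hyz : y = z := Sym2.eq_of_mem_of_ne hv hyj hzj (by rintro rfl; exact hvk hyk)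
      (by rintro rfl; exact hvl hzl)
    by_contra hxj
    have hxy : x ≠ y := by rintro rfl; exact hxj hyj
    exact hkl (hF.injective (((Sym2.mem_and_mem_iff hxy).1 ⟨hxk, hyk⟩).trans
      ((Sym2.mem_and_mem_iff hxy).1 ⟨hxl, hyz ▸ hzl⟩).symm))

end IsForest

theorem card_biUnion_toFinset_le_card {κ α : Type*} [DecidableEq α] {F : κ → Sym2 α}
    {s : Finset κ} (h : ∀ k ∈ s, ∀ v ∈ F k, ∃ l ∈ s, l ≠ k ∧ v ∈ F l) :
    #(s.biUnion fun k => (F k).toFinset) ≤ #s := by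
  have hcount := Finset.card_mul_le_card_mul (fun x k => x ∈ F k) (m := 2) (n := 2)
    (s := s.biUnion fun k => (F k).toFinset) (t := s) ?_ ?_
  · omega
  · intro x hx
    obtain ⟨k, hk, hxk⟩ := Finset.mem_biUnion.1 hx
    rw [Sym2.mem_toFinset] at hxk
    obtain ⟨l, hl, hlk, hxl⟩ := h k hk x hxk
    refine Finset.one_lt_card.2 ⟨k, ?_, l, ?_, hlk.symm⟩ <;>
      simp [Finset.bipartiteAbove, hk, hxk, hl, hxl]
  · intro k _
    calc #((s.biUnion fun k => (F k).toFinset).bipartiteBelow (fun x k => x ∈ F k) k)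
        ≤ #(F k).toFinset := Finset.card_le_card fun x hx => by
          simp only [Finset.bipartiteBelow, Finset.mem_filter] at hx
          exact Sym2.mem_toFinset.2 hx.2
      _ ≤ 2 := by rw [Sym2.card_toFinset]; split_ifs <;> norm_num

section Relabel

variable {ι α : Type*} [DecidableEq α] {F G : ι → Sym2 α}

theorem map_swap_mul_eq {s : Finset ι} {σ : Equiv.Perm α} (hσ : ∀ k ∈ s, (F k).map σ = G k)
    {x y : α} (hxy : ∀ k ∈ s, x ∈ G k ↔ y ∈ G k) :
    ∀ k ∈ s, (F k).map (Equiv.swap x y * σ) = G k := by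
  intro k hk
  rw [Equiv.Perm.coe_mul, ← Sym2.map_map, hσ k hk, Sym2.map_swap_eq_self (hxy k hk)]

/-- Relabelling step for a leaf edge `s(v, u)`: the image of `u` is pinned down by the edges
through `u`, and two swaps of vertices with equal incidences bring it and `v` into place. -/
theorem exists_perm_map_eq_insert [DecidableEq ι] (hG : IsForest G)
    (hGd : ∀ k, ¬(G k).IsDiag)
    (hmeet : ∀ k l, k ≠ l → ((∃ x, x ∈ F k ∧ x ∈ F l) ↔ ∃ y, y ∈ G k ∧ y ∈ G l))
    {s : Finset ι} {k₀ : ι} (hk₀ : k₀ ∉ s) {u v : α} (huv : u ≠ v) (hF₀ : F k₀ = s(v, u))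
    (hv : ∀ k ∈ s, v ∉ F k) {σ : Equiv.Perm α} (hσ : ∀ k ∈ s, (F k).map σ = G k) :
    ∃ τ : Equiv.Perm α, ∀ k ∈ insert k₀ s, (F k).map τ = G k := by
  have hne : ∀ k ∈ s, k ≠ k₀ := fun k hk h => hk₀ (h ▸ hk)
  have hmeet₀ : ∀ k ∈ s, (∃ y, y ∈ G k₀ ∧ y ∈ G k) ↔ u ∈ F k := by
    intro k hk
    rw [← hmeet k₀ k (hne k hk).symm]
    refine ⟨fun ⟨x, hx₀, hxk⟩ => ?_, fun huk => ⟨u, by simp [hF₀], huk⟩⟩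
    rcases Sym2.mem_iff.1 (hF₀ ▸ hx₀) with rfl | rfl
    · exact absurd hxk (hv k hk)
    · exact hxk
  obtain ⟨u', hu'₀, hu'⟩ : ∃ u' ∈ G k₀, ∀ k ∈ s, u ∈ F k → u' ∈ G k := by
    by_cases hex : ∃ l ∈ s, u ∈ F l
    · obtain ⟨l, hl, hul⟩ := hex
      obtain ⟨u', hu'₀, hu'l⟩ := (hmeet₀ l hl).2 hul
      refine ⟨u', hu'₀, fun k hk huk => ?_⟩
      rcases eq_or_ne l k with rfl | hlk
      · exact hu'l
      obtain ⟨y, hy₀, hyk⟩ := (hmeet₀ k hk).2 huk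
      obtain ⟨z, hzl, hzk⟩ := (hmeet l k hlk).1 ⟨u, hul, huk⟩
      exact hG.mem_of_meets (hne l hl).symm (hne k hk).symm hlk hu'₀ hu'l hy₀ hyk hzl hzk
    · push Not at hex
      exact ⟨(G k₀).out.1, Sym2.out_fst_mem _, fun k hk huk => absurd huk (hex k hk)⟩
  have hincu : ∀ k ∈ s, u' ∈ G k ↔ σ u ∈ G k := fun k hk => by
    have hσu : σ u ∈ G k ↔ u ∈ F k := by rw [← hσ k hk, Sym2.apply_mem_map_iff σ.injective]
    rw [hσu]
    exact ⟨fun h => (hmeet₀ k hk).1 ⟨u', hu'₀, h⟩, hu' k hk⟩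
  obtain ⟨σ₁, hσ₁, hσ₁u⟩ : ∃ σ₁ : Equiv.Perm α, (∀ k ∈ s, (F k).map σ₁ = G k) ∧ σ₁ u = u' :=
    ⟨_, map_swap_mul_eq hσ hincu, by simp⟩
  obtain ⟨v', hG₀⟩ := Sym2.mem_iff_exists.1 hu'₀
  have hu'v' : u' ≠ v' := by
    rintro rfl
    exact hGd k₀ (hG₀ ▸ Sym2.mk_isDiag_iff.2 rfl)
  have hincv : ∀ k ∈ s, v' ∈ G k ↔ σ₁ v ∈ G k := fun k hk => by
    have hσ₁v : σ₁ v ∉ G k := by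
      rw [← hσ₁ k hk, Sym2.apply_mem_map_iff σ₁.injective]
      exact hv k hk
    rw [iff_false_right hσ₁v]
    intro hv'k
    have huk := (hmeet₀ k hk).1 ⟨v', by simp [hG₀], hv'k⟩
    refine hne k hk (hG.injective ?_)
    rw [hG₀]
    exact (Sym2.mem_and_mem_iff hu'v').1 ⟨hu' k hk huk, hv'k⟩
  refine ⟨Equiv.swap v' (σ₁ v) * σ₁, ?_⟩
  rw [Finset.forall_mem_insert]
  refine ⟨?_, map_swap_mul_eq hσ₁ hincv⟩
  have hσ₁uv : u' ≠ σ₁ v := hσ₁u ▸ σ₁.injective.ne huv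
  rw [hF₀, hG₀, Sym2.map_mk, Equiv.Perm.mul_apply, Equiv.Perm.mul_apply, hσ₁u,
    Equiv.swap_apply_right, Equiv.swap_apply_of_ne_of_ne hu'v' hσ₁uv, Sym2.eq_swap]

/-- Whitney's line graph theorem for forests. -/
theorem exists_perm_map_eq_of_meets_iff (hF : IsForest F) (hG : IsForest G)
    (hFd : ∀ k, ¬(F k).IsDiag) (hGd : ∀ k, ¬(G k).IsDiag)
    (hmeet : ∀ k l, k ≠ l → ((∃ x, x ∈ F k ∧ x ∈ F l) ↔ ∃ y, y ∈ G k ∧ y ∈ G l))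
    (s : Finset ι) : ∃ σ : Equiv.Perm α, ∀ k ∈ s, (F k).map σ = G k := by
  classical
  induction s using Finset.strongInduction with
  | H s ih =>
    rcases s.eq_empty_or_nonempty with rfl | hs
    · exact ⟨1, by simp⟩
    obtain ⟨k₀, hk₀, v, hv, hleaf⟩ := hF s hs
    obtain ⟨u, hF₀⟩ := Sym2.mem_iff_exists.1 hv
    have huv : u ≠ v := by
      rintro rfl
      exact hFd k₀ (hF₀ ▸ Sym2.mk_isDiag_iff.2 rfl)
    obtain ⟨σ, hσ⟩ := ih (s.erase k₀) (Finset.erase_ssubset hk₀)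
    rw [← Finset.insert_erase hk₀]
    exact exists_perm_map_eq_insert hG hGd hmeet (Finset.notMem_erase k₀ s) huv hF₀
      (fun k hk => hleaf k (Finset.mem_of_mem_erase hk) (Finset.ne_of_mem_erase hk)) hσ

end Relabel

section Roots

variable {ι κ : Type*} [DecidableEq ι]

noncomputable def typeARoot (i j : ι) : EuclideanSpace ℝ ι :=
  EuclideanSpace.single i 1 - EuclideanSpace.single j 1

theorem typeARoot_apply (i j x : ι) :
    typeARoot i j x = (if x = i then 1 else 0) - (if x = j then 1 else 0) := by
  simp [typeARoot]

theorem typeARoot_perm_apply (σ : Equiv.Perm ι) (i j x : ι) :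
    typeARoot (σ i) (σ j) x = typeARoot i j (σ⁻¹ x) := by
  simp only [typeARoot_apply, Equiv.Perm.inv_eq_iff_eq]

theorem exists_sign_of_map_eq {σ : Equiv.Perm ι} {a b c d : ι}
    (h : s(a, b).map σ = s(c, d)) :
    ∃ ε : ℝ, (ε = 1 ∨ ε = -1) ∧ ∀ x, typeARoot c d x = ε * typeARoot a b (σ⁻¹ x) := by
  rcases Sym2.eq_iff.1 h with ⟨rfl, rfl⟩ | ⟨rfl, rfl⟩
  · exact ⟨1, Or.inl rfl, fun x => by rw [typeARoot_perm_apply, one_mul]⟩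
  · refine ⟨-1, Or.inr rfl, fun x => ?_⟩
    rw [← typeARoot_perm_apply, typeARoot_apply, typeARoot_apply]
    ring

variable [Fintype ι]

theorem inner_typeARoot (i j k l : ι) :
    ⟪typeARoot i j, typeARoot k l⟫ = (if i = k then 1 else 0) + (if j = l then 1 else 0)
      - (if i = l then 1 else 0) - (if j = k then 1 else 0) := by
  simp only [typeARoot, inner_sub_left, inner_sub_right, EuclideanSpace.inner_single_left,
    PiLp.single_apply, Real.ringHom_apply, mul_ite, mul_one, mul_zero]
  ring

theorem inner_typeARoot_ne_zero_iff {i j k l : ι} (hij : i ≠ j) (hkl : k ≠ l)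
    (hne : s(i, j) ≠ s(k, l)) :
    ⟪typeARoot i j, typeARoot k l⟫ ≠ 0 ↔ ∃ x, x ∈ s(i, j) ∧ x ∈ s(k, l) := by
  rw [inner_typeARoot]
  simp only [Sym2.mem_iff, Sym2.eq_iff, ne_eq] at hne ⊢
  split_ifs <;> subst_vars <;> simp_all

/-- Roots with endpoints in `S` lie in the hyperplane of zero coordinate sum inside the
`#S`-dimensional span of the `eᵢ`, `i ∈ S`. -/
theorem card_lt_card_of_linearIndependent [Fintype κ] {a b : κ → ι}
    (hli : LinearIndependent ℝ fun k => typeARoot (a k) (b k)) {S : Finset ι}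
    (hS : S.Nonempty) (habS : ∀ k, a k ∈ S ∧ b k ∈ S) : Fintype.card κ < #S := by
  set P := Submodule.span ℝ
    (↑(S.image fun i => EuclideanSpace.single i (1 : ℝ)) : Set (EuclideanSpace ℝ ι))
  set V := Submodule.span ℝ (Set.range fun k => typeARoot (a k) (b k))
  let φ := innerₛₗ ℝ (WithLp.toLp 2 fun _ : ι => (1 : ℝ))
  have hsingle : ∀ i ∈ S, EuclideanSpace.single i (1 : ℝ) ∈ P := fun i hi =>
    Submodule.subset_span (by simpa using ⟨i, hi, rfl⟩)
  have hφ : ∀ i, φ (EuclideanSpace.single i 1) = 1 := fun i => by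
    simp [φ, EuclideanSpace.inner_single_right]
  have hVP : V ≤ P := Submodule.span_le.2 <| Set.range_subset_iff.2 fun k =>
    Submodule.sub_mem _ (hsingle _ (habS k).1) (hsingle _ (habS k).2)
  have hVφ : V ≤ LinearMap.ker φ := Submodule.span_le.2 <| Set.range_subset_iff.2 fun k => by
    simp [typeARoot, hφ]
  obtain ⟨i₀, hi₀⟩ := hS
  have hVP' : V < P := lt_of_le_of_ne hVP fun hVP => by
    have := hVφ (hVP ▸ hsingle i₀ hi₀)
    simp [hφ] at this
  calc Fintype.card κ = Module.finrank ℝ V := (finrank_span_eq_card hli).symm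
    _ < Module.finrank ℝ P := Submodule.finrank_lt_finrank_of_lt hVP'
    _ ≤ #(S.image fun i => EuclideanSpace.single i (1 : ℝ)) := finrank_span_finset_le_card _
    _ ≤ #S := Finset.card_image_le

theorem isForest_of_linearIndependent {a b : κ → ι}
    (hli : LinearIndependent ℝ fun k => typeARoot (a k) (b k)) :
    IsForest fun k => s(a k, b k) := by
  intro s hs
  by_contra hleaf
  push Not at hleaf
  have hS := card_biUnion_toFinset_le_card hleaf
  obtain ⟨k, hk⟩ := hs
  have hlt := card_lt_card_of_linearIndependent
    (hli.comp (Subtype.val : s → κ) Subtype.val_injective)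
    (S := s.biUnion fun k => s(a k, b k).toFinset) ⟨a k, Finset.mem_biUnion.2 ⟨k, hk, by simp⟩⟩
    fun l => ⟨Finset.mem_biUnion.2 ⟨l, l.2, by simp⟩, Finset.mem_biUnion.2 ⟨l, l.2, by simp⟩⟩
  rw [Fintype.card_coe] at hlt
  omega

end Roots

/-- A family of simplices generating `Aₙ` has a unique embedding into the root system
of `Aₙ` up to the Weyl group: two linearly independent systems of roots `eᵢ - eⱼ` with
the same unsigned Gram matrix differ by a coordinate permutation and signs. -/
theorem An_embedding_unique {n : ℕ}
    (f g : Fin n → EuclideanSpace ℝ (Fin (n + 1)))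
    (hf_li : LinearIndependent ℝ f) (hg_li : LinearIndependent ℝ g)
    (hf_form : ∀ k, ∃ i j : Fin (n + 1), i ≠ j ∧
      f k = EuclideanSpace.single i 1 - EuclideanSpace.single j 1)
    (hg_form : ∀ k, ∃ i j : Fin (n + 1), i ≠ j ∧
      g k = EuclideanSpace.single i 1 - EuclideanSpace.single j 1)
    (habs : ∀ k l, |⟪f k, f l⟫| = |⟪g k, g l⟫|) :
    ∃ (σ : Equiv.Perm (Fin (n + 1))) (ε : Fin n → ℝ),
      (∀ k, ε k = 1 ∨ ε k = -1) ∧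
      ∀ k i, g k i = ε k * f k (σ⁻¹ i) := by
  choose a b hab hf using hf_form
  choose c d hcd hg using hg_form
  obtain rfl : f = fun k => typeARoot (a k) (b k) := funext hf
  obtain rfl : g = fun k => typeARoot (c k) (d k) := funext hg
  have hF := isForest_of_linearIndependent hf_li
  have hG := isForest_of_linearIndependent hg_li
  have hmeet (k l : Fin n) (hkl : k ≠ l) :
      (∃ x, x ∈ s(a k, b k) ∧ x ∈ s(a l, b l)) ↔ ∃ y, y ∈ s(c k, d k) ∧ y ∈ s(c l, d l) := by
    rw [← inner_typeARoot_ne_zero_iff (hab k) (hab l) (hF.injective.ne hkl),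
      ← inner_typeARoot_ne_zero_iff (hcd k) (hcd l) (hG.injective.ne hkl), ← abs_ne_zero,
      habs k l, abs_ne_zero]
  obtain ⟨σ, hσ⟩ := exists_perm_map_eq_of_meets_iff hF hG
    (fun k => Sym2.mk_isDiag_iff.not.2 (hab k)) (fun k => Sym2.mk_isDiag_iff.not.2 (hcd k))
    hmeet Finset.univ
  choose ε hε hgε using fun k => exists_sign_of_map_eq (hσ k (Finset.mem_univ k))
  exact ⟨σ, ε, hε, hgε⟩
end

section
/- Let f_1, …, f_n be linearly independent vectors in EuclideanSpace ℝ (Fin n), each belonging to the set {±e_i : i} ∪ {±e_i ± e_j : i ≠ j} (where e_1, …, e_n is the standard orthonormal basis), such that the family is indecomposable and at least one f_k equals ±e_i for some i. Then: exactly one index k satisfies f_k ∈ {±e_i : i}; the remaining n−1 vectors are of the form ±e_i ± e_j with the n−1 unordered pairs {i, j} pairwise distinct; and the simple graph on Fin n whose edges are these n−1 pairs is a tree. (Every family generating B_n corresponds to a tree with n vertices exactly one of which is marked.) -/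
open scoped RealInnerProductSpace

/-- `v` is a root of the root system `Bₙ`: `v = ±eᵢ` or `v = ±eᵢ ± eⱼ` with `i ≠ j`. -/
def IsBRoot {m : ℕ} (v : EuclideanSpace ℝ (Fin m)) : Prop :=
  (∃ i, v = EuclideanSpace.single i 1 ∨ v = -EuclideanSpace.single i 1) ∨
  (∃ i j, i ≠ j ∧
    (v = EuclideanSpace.single i 1 + EuclideanSpace.single j 1 ∨
     v = EuclideanSpace.single i 1 - EuclideanSpace.single j 1 ∨
     v = -(EuclideanSpace.single i 1 + EuclideanSpace.single j 1)))

/-- `v` is of the form `±eᵢ ± eⱼ` for the (unordered) pair `{i, j}`. -/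
def HasBDPair {m : ℕ} (v : EuclideanSpace ℝ (Fin m)) (i j : Fin m) : Prop :=
  v = EuclideanSpace.single i 1 + EuclideanSpace.single j 1 ∨
  v = EuclideanSpace.single i 1 - EuclideanSpace.single j 1 ∨
  v = EuclideanSpace.single j 1 - EuclideanSpace.single i 1 ∨
  v = -(EuclideanSpace.single i 1 + EuclideanSpace.single j 1)

theorem HasBDPair.swap {m : ℕ} {v : EuclideanSpace ℝ (Fin m)} {i j : Fin m}
    (h : HasBDPair v i j) : HasBDPair v j i := by
  rcases h with h | h | h | h
  · exact Or.inl (by rw [h, add_comm])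
  · exact Or.inr (Or.inr (Or.inl h))
  · exact Or.inr (Or.inl h)
  · exact Or.inr (Or.inr (Or.inr (by rw [h, add_comm])))

/-- The graph on `Fin n` whose edges are the unordered pairs `{i, j}` such that some
member of the family is of the form `±eᵢ ± eⱼ`. -/
def pairGraph {n : ℕ} (f : Fin n → EuclideanSpace ℝ (Fin n)) : SimpleGraph (Fin n) where
  Adj i j := i ≠ j ∧ ∃ k, HasBDPair (f k) i j
  symm := ⟨fun i j h => ⟨h.1.symm, h.2.elim fun k hk => ⟨k, hk.swap⟩⟩⟩
  loopless := ⟨fun i h => h.1 rfl⟩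

/-! The support of a root of `Bₙ` is a single index (short roots `±eᵢ`) or an edge of
`pairGraph f` (long roots `±eᵢ ± eⱼ`), supports of non-orthogonal roots meet, and every index
lies in some support because the `f k` span. Indecomposability therefore makes `pairGraph f`
connected, so it has at least `n - 1` edges. Every edge comes from a long root, and there are
at most `n - 1` long roots since some root is short. All these counts are therefore equal:
exactly one root is short, distinct long roots give distinct edges, and the connected graph
`pairGraph f` with `n - 1` edges on `n` vertices is a tree. -/

def IsShortBRoot {m : ℕ} (v : EuclideanSpace ℝ (Fin m)) : Prop :=
  ∃ i, v = EuclideanSpace.single i 1 ∨ v = -EuclideanSpace.single i 1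

section Roots

variable {m : ℕ} {v : EuclideanSpace ℝ (Fin m)}

lemma IsShortBRoot.exists_apply_ne_zero_iff (h : IsShortBRoot v) :
    ∃ a, ∀ x, v x ≠ 0 ↔ x = a := by
  obtain ⟨a, rfl | rfl⟩ := h <;> exact ⟨a, fun x => by by_cases x = a <;> simp [*]⟩

lemma HasBDPair.apply_ne_zero_iff {i j : Fin m} (h : HasBDPair v i j) (hij : i ≠ j) (x : Fin m) :
    v x ≠ 0 ↔ x = i ∨ x = j := by
  rcases h with rfl | rfl | rfl | rfl <;> by_cases x = i <;> by_cases x = j <;> simp_all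

lemma HasBDPair.not_isShortBRoot {i j : Fin m} (h : HasBDPair v i j) (hij : i ≠ j) :
    ¬ IsShortBRoot v := fun hs => by
  obtain ⟨a, ha⟩ := hs.exists_apply_ne_zero_iff
  have hi := (ha i).1 ((h.apply_ne_zero_iff hij i).2 (.inl rfl))
  have hj := (ha j).1 ((h.apply_ne_zero_iff hij j).2 (.inr rfl))
  exact hij (hi.trans hj.symm)

/-- The pair `{i, j}` is the support of `v`. -/
lemma HasBDPair.sym2_eq {i j a b : Fin m} (h : HasBDPair v i j) (hij : i ≠ j)
    (h' : HasBDPair v a b) (hab : a ≠ b) : s(i, j) = s(a, b) := by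
  rw [Sym2.eq_iff, ← Set.pair_eq_pair_iff]
  ext x
  exact (h.apply_ne_zero_iff hij x).symm.trans (h'.apply_ne_zero_iff hab x)

lemma IsBRoot.isShortBRoot_or (h : IsBRoot v) :
    IsShortBRoot v ∨ ∃ i j, i ≠ j ∧ HasBDPair v i j := by
  rcases h with h | ⟨i, j, hij, h | h | h⟩
  exacts [.inl h, .inr ⟨i, j, hij, .inl h⟩, .inr ⟨i, j, hij, .inr (.inl h)⟩,
    .inr ⟨i, j, hij, .inr (.inr (.inr h))⟩]

lemma IsBRoot.abs_apply_le_one (h : IsBRoot v) (x : Fin m) : |v x| ≤ 1 := by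
  rcases h with ⟨i, rfl | rfl⟩ | ⟨i, j, hij, rfl | rfl | rfl⟩ <;>
    simp only [PiLp.add_apply, PiLp.sub_apply, PiLp.neg_apply, PiLp.single_apply] <;>
    split_ifs <;> simp_all

lemma IsBRoot.ne_zero (h : IsBRoot v) : v ≠ 0 := by
  rintro rfl
  rcases h.isShortBRoot_or with h | ⟨i, j, hij, h⟩
  · obtain ⟨a, ha⟩ := h.exists_apply_ne_zero_iff
    exact (ha a).2 rfl rfl
  · exact (h.apply_ne_zero_iff hij i).2 (.inl rfl) rfl

lemma IsBRoot.not_hasBDPair_self (h : IsBRoot v) (i : Fin m) : ¬ HasBDPair v i i := by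
  have := h.abs_apply_le_one i
  rintro (rfl | rfl | rfl | rfl)
  · norm_num at this
  · exact h.ne_zero (sub_self _)
  · exact h.ne_zero (sub_self _)
  · norm_num at this

end Roots

lemma EuclideanSpace.exists_apply_ne_zero_of_inner_ne_zero {ι : Type*} [Fintype ι]
    {u w : EuclideanSpace ℝ ι} (h : ⟪u, w⟫ ≠ 0) : ∃ x, u x ≠ 0 ∧ w x ≠ 0 := by
  obtain ⟨x, -, hx⟩ := Finset.exists_ne_zero_of_sum_ne_zero h
  exact ⟨x, right_ne_zero_of_mul hx, left_ne_zero_of_mul hx⟩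

lemma EuclideanSpace.exists_apply_ne_zero_of_span_eq_top {ι κ : Type*} [Fintype ι]
    [DecidableEq ι] {f : κ → EuclideanSpace ℝ ι} (hf : Submodule.span ℝ (Set.range f) = ⊤)
    (a : ι) : ∃ k, f k a ≠ 0 := by
  by_contra! hc
  have hle : Submodule.span ℝ (Set.range f) ≤ LinearMap.ker (EuclideanSpace.projₗ a) :=
    Submodule.span_le.2 (by rintro _ ⟨k, rfl⟩; exact hc k)
  rw [hf] at hle
  simpa using hle (Submodule.mem_top (x := EuclideanSpace.single a (1 : ℝ)))

section Family

variable {n : ℕ} {f : Fin n → EuclideanSpace ℝ (Fin n)}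

lemma IsBRoot.reachable_pairGraph {k a b : Fin n} (hk : IsBRoot (f k)) (ha : f k a ≠ 0)
    (hb : f k b ≠ 0) : (pairGraph f).Reachable a b := by
  rcases hk.isShortBRoot_or with hs | ⟨i, j, hij, h⟩
  · obtain ⟨c, hc⟩ := hs.exists_apply_ne_zero_iff
    rw [(hc a).1 ha, (hc b).1 hb]
  · have hadj : (pairGraph f).Adj i j := ⟨hij, k, h⟩
    rcases (h.apply_ne_zero_iff hij a).1 ha with rfl | rfl <;>
      rcases (h.apply_ne_zero_iff hij b).1 hb with rfl | rfl
    exacts [.rfl, hadj.reachable, hadj.symm.reachable, .rfl]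

lemma pairGraph_connected (hspan : Submodule.span ℝ (Set.range f) = ⊤)
    (hroot : ∀ k, IsBRoot (f k)) (hindec : (gramGraph f).Connected) :
    (pairGraph f).Connected := by
  have : Nonempty (Fin n) := hindec.nonempty
  have chain : ∀ {k l}, (gramGraph f).Walk k l → ∀ {a b}, f k a ≠ 0 → f l b ≠ 0 →
      (pairGraph f).Reachable a b := by
    intro k l p
    induction p with
    | nil => exact (hroot _).reachable_pairGraph
    | cons hadj _ ih =>
      intro a b ha hb
      obtain ⟨x, hkx, hlx⟩ := EuclideanSpace.exists_apply_ne_zero_of_inner_ne_zero hadj.2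
      exact ((hroot _).reachable_pairGraph ha hkx).trans (ih hlx hb)
  refine ⟨fun a b => ?_⟩
  obtain ⟨k, hk⟩ := EuclideanSpace.exists_apply_ne_zero_of_span_eq_top hspan a
  obtain ⟨l, hl⟩ := EuclideanSpace.exists_apply_ne_zero_of_span_eq_top hspan b
  exact chain (hindec k l).some hk hl

variable (f) in
open Classical in
/-- The pair `{i, j}` of `f k = ±eᵢ ± eⱼ`; the junk value `s(k, k)` if `f k` has no such form. -/
noncomputable def pairEdge (k : Fin n) : Sym2 (Fin n) :=
  if h : ∃ p : Fin n × Fin n, p.1 ≠ p.2 ∧ HasBDPair (f k) p.1 p.2 then s(h.choose.1, h.choose.2)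
  else s(k, k)

lemma pairEdge_eq {k i j : Fin n} (hij : i ≠ j) (h : HasBDPair (f k) i j) :
    pairEdge f k = s(i, j) := by
  have hex : ∃ p : Fin n × Fin n, p.1 ≠ p.2 ∧ HasBDPair (f k) p.1 p.2 := ⟨(i, j), hij, h⟩
  rw [pairEdge, dif_pos hex]
  exact hex.choose_spec.2.sym2_eq hex.choose_spec.1 h hij

lemma edgeSet_pairGraph (hroot : ∀ k, IsBRoot (f k)) :
    (pairGraph f).edgeSet = pairEdge f '' {k | ¬ IsShortBRoot (f k)} := by
  ext e
  induction e using Sym2.ind with | _ a b => ?_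
  constructor
  · rintro ⟨hab, k, hk⟩
    exact ⟨k, hk.not_isShortBRoot hab, pairEdge_eq hab hk⟩
  · rintro ⟨k, hk, hke⟩
    obtain ⟨i, j, hij, h⟩ := ((hroot k).isShortBRoot_or).resolve_left hk
    rw [← hke, pairEdge_eq hij h]
    exact ⟨hij, k, h⟩

end Family

/-- Every family generating `Bₙ` corresponds to a tree with `n` vertices exactly one
of which is marked: in an indecomposable linearly independent system of `n` roots of
`Bₙ` containing a root `±eᵢ`, exactly one member is of the form `±eᵢ`, the remaining
`n - 1` members are of the form `±eᵢ ± eⱼ` with pairwise distinct unordered pairs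
`{i, j}`, and these pairs are the edges of a tree on `Fin n`. -/
theorem Bn_family_is_marked_tree {n : ℕ}
    (f : Fin n → EuclideanSpace ℝ (Fin n))
    (hli : LinearIndependent ℝ f)
    (hroot : ∀ k, IsBRoot (f k))
    (hindec : (gramGraph f).Connected)
    (hshort : ∃ k i, f k = EuclideanSpace.single i 1 ∨
      f k = -EuclideanSpace.single i 1) :
    (∃! k, ∃ i, f k = EuclideanSpace.single i 1 ∨
      f k = -EuclideanSpace.single i 1) ∧
    (∀ k, (¬ ∃ i, f k = EuclideanSpace.single i 1 ∨
        f k = -EuclideanSpace.single i 1) →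
      ∃ i j, i ≠ j ∧ HasBDPair (f k) i j) ∧
    (∀ k l i j, k ≠ l → HasBDPair (f k) i j → ¬ HasBDPair (f l) i j) ∧
    (pairGraph f).IsTree := by
  set S := {k | IsShortBRoot (f k)}
  set L := {k | ¬ IsShortBRoot (f k)}
  have hconn := pairGraph_connected
    (hli.span_eq_top_of_card_eq_finrank' (by simp)) hroot hindec
  have hedges : (pairGraph f).edgeSet = pairEdge f '' L := edgeSet_pairGraph hroot
  have hlow : n ≤ (pairEdge f '' L).ncard + 1 := by
    simpa [hedges] using hconn.card_vert_le_card_edgeSet_add_one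
  have hsplit : S.ncard + L.ncard = n :=
    (Set.ncard_add_ncard_compl _).trans (Nat.card_fin n)
  have hpos : 0 < S.ncard := (Set.ncard_pos).2 hshort
  have himage : (pairEdge f '' L).ncard ≤ L.ncard := Set.ncard_image_le
  have hinj : Set.InjOn (pairEdge f) L := Set.injOn_of_ncard_image_eq (by omega)
  refine ⟨?_, fun k hk => ((hroot k).isShortBRoot_or).resolve_left hk, ?_, ?_⟩
  · obtain ⟨k₀, hk₀⟩ := Set.ncard_eq_one.1 (by omega : S.ncard = 1)
    exact ⟨k₀, Set.eq_singleton_iff_unique_mem.1 hk₀⟩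
  · intro k l i j hkl hk hl
    obtain rfl | hij := eq_or_ne i j
    · exact (hroot k).not_hasBDPair_self i hk
    · exact hkl (hinj (hk.not_isShortBRoot hij) (hl.not_isShortBRoot hij)
        ((pairEdge_eq hij hk).trans (pairEdge_eq hij hl).symm))
  · refine SimpleGraph.isTree_iff_connected_and_card.2 ⟨hconn, ?_⟩
    rw [Nat.card_coe_set_eq, hedges, Nat.card_fin]
    omega
end

section
/- Let (T₁, m₁) and (T₂, m₂) be trees on the vertex set Fin n, each with one marked vertex m₁ resp. m₂. Associate to a marked tree (T, m) the family of vectors in EuclideanSpace ℝ (Fin n) consisting of the vector e_m together with one vector e_i − e_j for each edge {i, j} of T. Then the following are equivalent: (1) there is a graph isomorphism from T₁ to T₂ taking m₁ to m₂; (2) there exist a linear isometry W of EuclideanSpace ℝ (Fin n), a bijection φ from the vector family of (T₁, m₁) to that of (T₂, m₂), and signs ε_v ∈ {−1, 1} such that φ(v) = ε_v · W(v) for every vector v of the first family. (The families generating B_n are in one-to-one correspondence with the trees with n vertices exactly one of which is marked.) -/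
/-!
An isomorphism `σ` of marked trees acts on `ℝⁿ` by permuting coordinates, and sends each edge
vector `eᵢ - eⱼ` to `±(e_{σ i} - e_{σ j})`. Conversely, `e_m` has norm `1` and the edge vectors
norm `√2`, so a signed congruence of the families matches `e_{m₁}` with `±e_{m₂}` and edges with
edges. As `T₁` is connected, every `e_v` is an integral combination of `e_{m₁}` and edge vectors
of `T₁`, so `W e_v` is a unit vector with integer coordinates, that is `±e_{σ v}`; `σ` is a
permutation since `W` is injective. Comparing supports, `σ` maps every edge of `T₁` to the edge
of `T₂` it is matched with, hence is a marked isomorphism.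
-/

open EuclideanSpace

namespace EuclideanSpace

def integerLattice (ι : Type*) : AddSubgroup (EuclideanSpace ℝ ι) where
  carrier := {x | ∀ i, ∃ z : ℤ, x i = z}
  add_mem' {x y} hx hy i := by
    obtain ⟨a, ha⟩ := hx i
    obtain ⟨b, hb⟩ := hy i
    exact ⟨a + b, by simp [ha, hb]⟩
  zero_mem' _ := ⟨0, by simp⟩
  neg_mem' {x} hx i := by
    obtain ⟨a, ha⟩ := hx i
    exact ⟨-a, by simp [ha]⟩

variable {ι : Type*} [DecidableEq ι]

theorem single_mem_integerLattice (i : ι) : single i (1 : ℝ) ∈ integerLattice ι := fun j =>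
  ⟨if j = i then 1 else 0, by simp [PiLp.single_apply, apply_ite (Int.cast : ℤ → ℝ)]⟩

variable [Fintype ι]

theorem exists_eq_single_of_mem_integerLattice {x : EuclideanSpace ℝ ι}
    (hx : x ∈ integerLattice ι) (hnorm : ‖x‖ = 1) : ∃ q, x q ≠ 0 ∧ x = single q (x q) := by
  obtain ⟨q, hq⟩ : ∃ q, x q ≠ 0 := by
    by_contra! h
    have : x = 0 := by ext i; exact h i
    simp [this] at hnorm
  obtain ⟨z, hz⟩ := hx q
  have hz0 : z ≠ 0 := by rintro rfl; simp [hz] at hq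
  have hq_sq : 1 ≤ x q ^ 2 := by
    rw [hz, ← Int.cast_pow, ← Int.cast_one, Int.cast_le]
    nlinarith [Int.one_le_abs hz0, sq_abs z]
  have hsum : x q ^ 2 + ∑ i ∈ Finset.univ.erase q, x i ^ 2 = 1 := by
    rw [Finset.add_sum_erase _ (fun i => x i ^ 2) (Finset.mem_univ q), ← real_norm_sq_eq, hnorm,
      one_pow]
  have hrest : ∑ i ∈ Finset.univ.erase q, x i ^ 2 = 0 :=
    le_antisymm (by linarith) (Finset.sum_nonneg fun i _ => sq_nonneg _)
  refine ⟨q, hq, ?_⟩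
  ext i
  rcases eq_or_ne i q with rfl | hi
  · simp
  · have := (Finset.sum_eq_zero_iff_of_nonneg fun j _ => sq_nonneg (x j)).mp hrest i
      (Finset.mem_erase.mpr ⟨hi, Finset.mem_univ i⟩)
    simpa [PiLp.single_apply, hi] using this

end EuclideanSpace

namespace LinearIsometryEquiv

variable {ι : Type*} [Fintype ι] [DecidableEq ι]

theorem apply_eq_zero_iff_of_map_single {W : EuclideanSpace ℝ ι ≃ₗᵢ[ℝ] EuclideanSpace ℝ ι}
    {p q : ι} {s : ℝ} (hs : s ≠ 0) (hW : W (single p 1) = single q s)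
    (x : EuclideanSpace ℝ ι) : W x q = 0 ↔ x p = 0 := by
  have h : s * W x q = x p := by
    simpa [hW, inner_single_left] using W.inner_map_map (single p 1) x
  rw [← h, mul_eq_zero, or_iff_right hs]

theorem exists_equiv_map_single_eq {W : EuclideanSpace ℝ ι ≃ₗᵢ[ℝ] EuclideanSpace ℝ ι}
    (hW : ∀ v, W (single v 1) ∈ integerLattice ι) :
    ∃ σ : ι ≃ ι, ∀ v, ∃ s ≠ 0, W (single v 1) = single (σ v) s := by
  have hunit (v : ι) := exists_eq_single_of_mem_integerLattice (hW v) (by simp)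
  choose σ hσ0 hσ using hunit
  have hinj : Function.Injective σ := by
    intro u v huv
    have h := (apply_eq_zero_iff_of_map_single (hσ0 u) (hσ u) (single v 1)).not.mp
    rw [huv] at h
    simpa [PiLp.single_apply, eq_comm] using h (hσ0 v)
  exact ⟨Equiv.ofBijective σ hinj.bijective_of_finite, fun v => ⟨_, hσ0 v, hσ v⟩⟩

end LinearIsometryEquiv

def SignedCongruent {E α β : Type*} [NormedAddCommGroup E] [InnerProductSpace ℝ E]
    (F₁ : α → E) (F₂ : β → E) : Prop :=
  ∃ (W : E ≃ₗᵢ[ℝ] E) (φ : α ≃ β) (ε : α → ℝ),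
    (∀ v, ε v = 1 ∨ ε v = -1) ∧ ∀ v, F₂ (φ v) = ε v • W (F₁ v)

namespace SimpleGraph

variable {V V' : Type*} {G₁ : SimpleGraph V} {G₂ : SimpleGraph V'}

theorem Connected.mem_of_forall_adj_sub_mem {G : SimpleGraph V} (hG : G.Connected)
    {M : Type*} [AddCommGroup M] {L : AddSubgroup M} {f : V → M} {m : V} (hm : f m ∈ L)
    (hadj : ∀ i j, G.Adj i j → f i - f j ∈ L) (v : V) : f v ∈ L := by
  obtain ⟨w⟩ := hG.preconnected m v
  induction w with
  | nil => exact hm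
  | cons h _ ih => exact ih (by simpa only [sub_sub_cancel] using L.sub_mem hm (hadj _ _ h))

def Iso.ofEdgeSetEquiv (σ : V ≃ V') (ψ : G₁.edgeSet ≃ G₂.edgeSet)
    (hψ : ∀ e, (ψ e : Sym2 V') = Sym2.map σ e) : G₁ ≃g G₂ where
  toEquiv := σ
  map_rel_iff' {a b} := by
    constructor
    · intro hab
      have he : (ψ.symm ⟨s(σ a, σ b), hab⟩ : Sym2 V) = s(a, b) := by
        apply Sym2.map.injective σ.injective
        rw [← hψ, Equiv.apply_symm_apply, Sym2.map_mk]
      simpa only [he, mem_edgeSet] using (ψ.symm ⟨s(σ a, σ b), hab⟩).2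
    · intro hab
      have he := hψ ⟨s(a, b), hab⟩
      rw [Sym2.map_mk] at he
      simpa only [he, mem_edgeSet] using (ψ ⟨s(a, b), hab⟩).2

variable {ι : Type*} [DecidableEq ι]

def IsEdgeVectors (G : SimpleGraph ι) (vec : G.edgeSet → EuclideanSpace ℝ ι) : Prop :=
  ∀ e : G.edgeSet, ∃ i j : ι, (e : Sym2 ι) = s(i, j) ∧ vec e = single i 1 - single j 1

noncomputable def markedFamily {G : SimpleGraph ι} (m : ι) (vec : G.edgeSet → EuclideanSpace ℝ ι) :
    Option G.edgeSet → EuclideanSpace ℝ ι :=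
  fun v => v.elim (single m 1) vec

namespace IsEdgeVectors

variable {G : SimpleGraph ι} {vec : G.edgeSet → EuclideanSpace ℝ ι}

theorem single_sub_single_eq (hvec : G.IsEdgeVectors vec) (e : G.edgeSet) {a b : ι}
    (he : (e : Sym2 ι) = s(a, b)) :
    single a 1 - single b 1 = vec e ∨ single a 1 - single b 1 = -vec e := by
  obtain ⟨i, j, hij, hv⟩ := hvec e
  rcases Sym2.eq_iff.mp (he.symm.trans hij) with ⟨rfl, rfl⟩ | ⟨rfl, rfl⟩
  · exact Or.inl hv.symm
  · exact Or.inr (by rw [hv, neg_sub])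

theorem apply_ne_zero_iff (hvec : G.IsEdgeVectors vec) (e : G.edgeSet) (p : ι) :
    vec e p ≠ 0 ↔ p ∈ (e : Sym2 ι) := by
  obtain ⟨i, j, hij, hv⟩ := hvec e
  have hne : i ≠ j := G.ne_of_adj (by simpa [hij] using e.2)
  rw [hv, hij, Sym2.mem_iff]
  rcases eq_or_ne p i with rfl | hpi <;> rcases eq_or_ne p j with rfl | hpj <;>
    simp_all

theorem mem_integerLattice (hvec : G.IsEdgeVectors vec) (e : G.edgeSet) :
    vec e ∈ integerLattice ι := by
  obtain ⟨i, j, -, hv⟩ := hvec e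
  exact hv ▸ sub_mem (single_mem_integerLattice i) (single_mem_integerLattice j)

theorem markedFamily_mem_integerLattice (hvec : G.IsEdgeVectors vec) (m : ι)
    (v : Option G.edgeSet) : markedFamily m vec v ∈ integerLattice ι := by
  rcases v with _ | e
  exacts [single_mem_integerLattice m, hvec.mem_integerLattice e]

theorem map_single_mem_integerLattice (hvec : G.IsEdgeVectors vec) (hG : G.Connected)
    {W : EuclideanSpace ℝ ι →ₗ[ℝ] EuclideanSpace ℝ ι} {m : ι}
    (hW : ∀ v, W (markedFamily m vec v) ∈ integerLattice ι) (v : ι) :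
    W (single v 1) ∈ integerLattice ι := by
  refine hG.mem_of_forall_adj_sub_mem (f := fun v => W (single v 1)) (hW none) ?_ v
  intro i j hij
  rw [← map_sub]
  rcases hvec.single_sub_single_eq ⟨s(i, j), hij⟩ rfl with h | h <;> rw [h]
  · exact hW (some _)
  · exact map_neg W _ ▸ neg_mem (hW (some _))

variable [Fintype ι]

theorem norm_sq (hvec : G.IsEdgeVectors vec) (e : G.edgeSet) : ‖vec e‖ ^ 2 = 2 := by
  obtain ⟨i, j, hij, hv⟩ := hvec e
  have hne : i ≠ j := G.ne_of_adj (by simpa [hij] using e.2)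
  rw [hv, norm_sub_sq_real]
  simp [inner_single_left, hne.symm]
  norm_num

theorem norm_markedFamily_eq_one_iff (hvec : G.IsEdgeVectors vec) (m : ι)
    (v : Option G.edgeSet) : ‖markedFamily m vec v‖ = 1 ↔ v = none := by
  rcases v with _ | e
  · simp [markedFamily]
  · have h := hvec.norm_sq e
    simp only [markedFamily, Option.elim_some, reduceCtorEq, iff_false]
    intro h1
    rw [h1] at h
    norm_num at h

end IsEdgeVectors

variable [Fintype ι] {G₁ G₂ : SimpleGraph ι}
  {vec₁ : G₁.edgeSet → EuclideanSpace ℝ ι} {vec₂ : G₂.edgeSet → EuclideanSpace ℝ ι}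

theorem IsEdgeVectors.coe_eq_map_of_eq_smul (hvec₁ : G₁.IsEdgeVectors vec₁)
    (hvec₂ : G₂.IsEdgeVectors vec₂) {W : EuclideanSpace ℝ ι ≃ₗᵢ[ℝ] EuclideanSpace ℝ ι}
    {σ : ι ≃ ι} (hσ : ∀ v, ∃ s ≠ 0, W (single v 1) = single (σ v) s)
    {e : G₁.edgeSet} {f : G₂.edgeSet} {c : ℝ} (hc : c ≠ 0) (h : vec₂ f = c • W (vec₁ e)) :
    (f : Sym2 ι) = Sym2.map σ e := by
  refine Sym2.ext fun q => ?_
  obtain ⟨p, rfl⟩ := σ.surjective q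
  obtain ⟨s, hs, hWp⟩ := hσ p
  rw [← hvec₂.apply_ne_zero_iff, h, PiLp.smul_apply, smul_ne_zero_iff_right hc,
    Ne, W.apply_eq_zero_iff_of_map_single hs hWp, ← Ne, hvec₁.apply_ne_zero_iff]
  simp [Sym2.mem_map, σ.injective.eq_iff]

theorem signedCongruent_of_iso (hvec₁ : G₁.IsEdgeVectors vec₁) (hvec₂ : G₂.IsEdgeVectors vec₂)
    {m₁ m₂ : ι} (φ : G₁ ≃g G₂) (hφ : φ m₁ = m₂) :
    SignedCongruent (markedFamily m₁ vec₁) (markedFamily m₂ vec₂) := by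
  let W := LinearIsometryEquiv.piLpCongrLeft 2 ℝ ℝ φ.toEquiv
  have hW (v : ι) : W (single v 1) = single (φ v) 1 := EuclideanSpace.piLpCongrLeft_single _ _ _
  have hsign : ∀ v, ∃ c : ℝ, (c = 1 ∨ c = -1) ∧
      markedFamily m₂ vec₂ (Equiv.optionCongr φ.mapEdgeSet v) =
        c • W (markedFamily m₁ vec₁ v) := by
    rintro (_ | e)
    · exact ⟨1, Or.inl rfl, by simp [markedFamily, hW, hφ]⟩
    · obtain ⟨i, j, hij, hv⟩ := hvec₁ e
      have hmap : (φ.mapEdgeSet e : Sym2 ι) = s(φ i, φ j) := by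
        simp [Iso.mapEdgeSet, Hom.mapEdgeSet, hij]
      have hWe : W (vec₁ e) = single (φ i) 1 - single (φ j) 1 := by rw [hv, map_sub, hW, hW]
      rcases hvec₂.single_sub_single_eq _ hmap with h | h
      · exact ⟨1, Or.inl rfl, by simp [markedFamily, hWe, h]⟩
      · exact ⟨-1, Or.inr rfl, by simp [markedFamily, hWe, h]⟩
  choose ε hε hεW using hsign
  exact ⟨W, _, ε, hε, hεW⟩

theorem exists_iso_of_signedCongruent (hG₁ : G₁.Connected) (hvec₁ : G₁.IsEdgeVectors vec₁)
    (hvec₂ : G₂.IsEdgeVectors vec₂) {m₁ m₂ : ι}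
    (h : SignedCongruent (markedFamily m₁ vec₁) (markedFamily m₂ vec₂)) :
    ∃ φ : G₁ ≃g G₂, φ m₁ = m₂ := by
  obtain ⟨W, φ, ε, hε, hφ⟩ := h
  have hε0 (v) : ε v ≠ 0 := by rcases hε v with h | h <;> norm_num [h]
  have hW (v) : W (markedFamily m₁ vec₁ v) = ε v • markedFamily m₂ vec₂ (φ v) := by
    rcases hε v with h | h <;> simp [hφ, h]
  have hnone : φ none = none := by
    rw [← hvec₂.norm_markedFamily_eq_one_iff m₂, hφ, norm_smul, W.norm_map,
      hvec₁.norm_markedFamily_eq_one_iff m₁ none |>.mpr rfl]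
    rcases hε none with h | h <;> norm_num [h]
  have hmem (v) : W (markedFamily m₁ vec₁ v) ∈ integerLattice ι := by
    rw [hW]
    rcases hε v with h | h <;> simp [h, hvec₂.markedFamily_mem_integerLattice]
  obtain ⟨σ, hσ⟩ := W.exists_equiv_map_single_eq
    (hvec₁.map_single_mem_integerLattice hG₁ (W := W.toLinearMap) hmem)
  have hsome (e : G₁.edgeSet) : some (φ.removeNone e) = φ (some e) :=
    Equiv.removeNone_some _ (Option.ne_none_iff_exists'.mp fun h => by
      simpa using φ.injective (h.trans hnone.symm))
  refine ⟨Iso.ofEdgeSetEquiv σ φ.removeNone fun e => ?_, ?_⟩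
  · refine hvec₁.coe_eq_map_of_eq_smul hvec₂ hσ (hε0 (some e)) ?_
    have h := hφ (some e)
    rwa [← hsome] at h
  · show σ m₁ = m₂
    obtain ⟨s, -, hs⟩ := hσ m₁
    have h := hW none
    rw [hnone] at h
    by_contra hne
    have h₂ := congrArg (· m₂) (hs.symm.trans h)
    exact hε0 none (by simpa [markedFamily, Ne.symm hne] using h₂.symm)

end SimpleGraph

theorem Bn_families_iff_marked_trees_general {n : ℕ}
    (T₁ T₂ : SimpleGraph (Fin n)) (m₁ m₂ : Fin n)
    (h₁ : T₁.IsTree)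
    (vec₁ : T₁.edgeSet → EuclideanSpace ℝ (Fin n))
    (vec₂ : T₂.edgeSet → EuclideanSpace ℝ (Fin n))
    (hvec₁ : ∀ e : T₁.edgeSet, ∃ i j : Fin n,
      (e : Sym2 (Fin n)) = s(i, j) ∧
      vec₁ e = EuclideanSpace.single i 1 - EuclideanSpace.single j 1)
    (hvec₂ : ∀ e : T₂.edgeSet, ∃ i j : Fin n,
      (e : Sym2 (Fin n)) = s(i, j) ∧
      vec₂ e = EuclideanSpace.single i 1 - EuclideanSpace.single j 1) :
    (∃ φ : T₁ ≃g T₂, φ m₁ = m₂) ↔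
      ∃ (W : EuclideanSpace ℝ (Fin n) ≃ₗᵢ[ℝ] EuclideanSpace ℝ (Fin n))
        (φ : Option T₁.edgeSet ≃ Option T₂.edgeSet)
        (ε : Option T₁.edgeSet → ℝ),
        (∀ v, ε v = 1 ∨ ε v = -1) ∧
        ∀ v : Option T₁.edgeSet,
          (φ v).elim (EuclideanSpace.single m₂ 1) vec₂ =
            ε v • W (v.elim (EuclideanSpace.single m₁ 1) vec₁) := by
  exact ⟨fun ⟨φ, hφ⟩ => SimpleGraph.signedCongruent_of_iso hvec₁ hvec₂ φ hφ,
    SimpleGraph.exists_iso_of_signedCongruent h₁.connected hvec₁ hvec₂⟩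

/-- The families generating `Bₙ` are in one-to-one correspondence with the trees with
`n` vertices exactly one of which is marked: two marked trees on `Fin n` are
isomorphic by a marking-preserving isomorphism if and only if their associated vector
families (the vector `e_m` for the marked vertex `m` together with one vector
`eᵢ - eⱼ` per edge) agree up to a linear isometry, a bijection of the index sets,
and signs. -/
theorem Bn_families_iff_marked_trees {n : ℕ}
    (T₁ T₂ : SimpleGraph (Fin n)) (m₁ m₂ : Fin n)
    (h₁ : T₁.IsTree) (h₂ : T₂.IsTree)
    (vec₁ : T₁.edgeSet → EuclideanSpace ℝ (Fin n))
    (vec₂ : T₂.edgeSet → EuclideanSpace ℝ (Fin n))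
    (hvec₁ : ∀ e : T₁.edgeSet, ∃ i j : Fin n,
      (e : Sym2 (Fin n)) = s(i, j) ∧
      vec₁ e = EuclideanSpace.single i 1 - EuclideanSpace.single j 1)
    (hvec₂ : ∀ e : T₂.edgeSet, ∃ i j : Fin n,
      (e : Sym2 (Fin n)) = s(i, j) ∧
      vec₂ e = EuclideanSpace.single i 1 - EuclideanSpace.single j 1) :
    (∃ φ : T₁ ≃g T₂, φ m₁ = m₂) ↔
      ∃ (W : EuclideanSpace ℝ (Fin n) ≃ₗᵢ[ℝ] EuclideanSpace ℝ (Fin n))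
        (φ : Option T₁.edgeSet ≃ Option T₂.edgeSet)
        (ε : Option T₁.edgeSet → ℝ),
        (∀ v, ε v = 1 ∨ ε v = -1) ∧
        ∀ v : Option T₁.edgeSet,
          (φ v).elim (EuclideanSpace.single m₂ 1) vec₂ =
            ε v • W (v.elim (EuclideanSpace.single m₁ 1) vec₁) :=
  Bn_families_iff_marked_trees_general T₁ T₂ m₁ m₂ h₁ vec₁ vec₂ hvec₁ hvec₂
end

section
/- Let G be a connected simple graph on the vertex set Fin n with exactly n edges, and let {a, b} and {c, d} be two edges of G that are not bridges. For a non-bridge edge {a, b}, let F_{a,b} denote the vector family assigning e_a + e_b to the edge {a, b} and e_i − e_j to every other edge {i, j} of G. Then there exist a sign function δ : Fin n → {−1, 1} and signs ε_e ∈ {−1, 1} for each edge e of G such that the diagonal isometry D(x)_i = δ_i x_i satisfies D(F_{a,b}(e)) = ε_e · F_{c,d}(e) for every edge e of G. (The family of simplices obtained from a unicyclic graph does not depend on which cycle edge is chosen to carry the vector e_i + e_j.) -/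
/-!
Write `H` for `G` with both edges `{a, b}` and `{c, d}` deleted. When they differ, `G` minus
`{c, d}` is connected with `n - 1` edges, hence a tree, so `{a, b}` is a bridge of it: the
vertices reachable from `a` in `H` form a set `S` with `b ∉ S`, and by symmetry `S` also
separates `c` from `d`. Thus the edges of `G` crossing `S` are exactly `{a, b}` and `{c, d}`
(when the two edges coincide, take `S` to be everything). With `δ = 1` on `S` and `-1` off it,
`D` maps `eᵢ + t eⱼ` to `±(eᵢ + δᵢ δⱼ t eⱼ)`, so it turns `eᵢ - eⱼ` into `±(eᵢ + eⱼ)` exactly on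
the crossing edges, which is how the two families differ.
-/

namespace SimpleGraph

variable {V : Type*} {G : SimpleGraph V}

theorem Reachable.deleteEdges_reachable_or {v a : V} (b : V) (h : G.Reachable v a) :
    (G.deleteEdges {s(a, b)}).Reachable v a ∨ (G.deleteEdges {s(a, b)}).Reachable v b := by
  obtain ⟨p⟩ := h
  induction p with
  | nil => exact .inl .rfl
  | @cons x y a hxy _ ih =>
    by_cases he : s(x, y) = s(a, b)
    · rcases Sym2.eq_iff.mp he with ⟨rfl, -⟩ | ⟨rfl, -⟩
      · exact .inl .rfl
      · exact .inr .rfl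
    · have hxy' : (G.deleteEdges {s(a, b)}).Adj x y := deleteEdges_adj.mpr ⟨hxy, he⟩
      exact ih.imp hxy'.reachable.trans hxy'.reachable.trans

theorem reachable_iff_not_reachable_of_forall_reachable_or {a b u v : V}
    (hside : ∀ w, G.Reachable a w ∨ G.Reachable b w) (huv : ¬ G.Reachable u v) :
    G.Reachable a u ↔ ¬ G.Reachable a v :=
  ⟨fun hu hv => huv (hu.symm.trans hv), fun hv => (hside u).resolve_right fun hu =>
    huv (hu.symm.trans ((hside v).resolve_left hv))⟩

theorem not_reachable_deleteEdges_pair [Finite V] (hG : G.Connected)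
    (hcard : G.edgeSet.ncard = Nat.card V) {a b c d : V} (hab : s(a, b) ∈ G.edgeSet)
    (hcd : s(c, d) ∈ G.edgeSet) (hne : s(a, b) ≠ s(c, d)) (hnb : ¬ G.IsBridge s(c, d)) :
    ¬ (G.deleteEdges {s(a, b), s(c, d)}).Reachable a b := by
  have hT : (G.deleteEdges {s(c, d)}).IsTree := by
    rw [isTree_iff_connected_and_card, edgeSet_deleteEdges, Nat.card_coe_set_eq,
      Set.ncard_sdiff_singleton_add_one hcd, hcard]
    exact ⟨hG.connected_delete_edge_of_not_isBridge hnb, rfl⟩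
  have hbridge := isAcyclic_iff_forall_isBridge.mp hT.isAcyclic
    (e := s(a, b)) (by simp [edgeSet_deleteEdges, hab, hne])
  rwa [isBridge_iff, deleteEdges_deleteEdges, Set.union_comm, Set.singleton_union] at hbridge

theorem Connected.exists_set_forall_adj_mem_iff_mem_iff [Finite V] (hG : G.Connected)
    (hcard : G.edgeSet.ncard = Nat.card V) {a b c d : V} (hab : s(a, b) ∈ G.edgeSet)
    (hcd : s(c, d) ∈ G.edgeSet) (hnb_ab : ¬ G.IsBridge s(a, b))
    (hnb_cd : ¬ G.IsBridge s(c, d)) :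
    ∃ S : Set V, ∀ u v, G.Adj u v →
      ((u ∈ S ↔ v ∈ S) ↔ (s(u, v) = s(a, b) ↔ s(u, v) = s(c, d))) := by
  by_cases hne : s(a, b) = s(c, d)
  · exact ⟨Set.univ, by simp [hne]⟩
  set H := G.deleteEdges {s(a, b), s(c, d)}
  have hab' : ¬ H.Reachable a b := not_reachable_deleteEdges_pair hG hcard hab hcd hne hnb_cd
  have hcd' : ¬ H.Reachable c d := by
    rw [show H = G.deleteEdges {s(c, d), s(a, b)} by simp [H, Set.pair_comm]]
    exact not_reachable_deleteEdges_pair hG hcard hcd hab (Ne.symm hne) hnb_ab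
  have hside : ∀ v, H.Reachable a v ∨ H.Reachable b v := fun v => by
    have h := ((hG.connected_delete_edge_of_not_isBridge hnb_cd).preconnected v a
      ).deleteEdges_reachable_or b
    rw [deleteEdges_deleteEdges, Set.union_comm, Set.singleton_union] at h
    exact h.imp Reachable.symm Reachable.symm
  refine ⟨{v | H.Reachable a v}, fun u v huv => ?_⟩
  have hcross : ∀ {x y}, s(u, v) = s(x, y) → ¬ H.Reachable x y →
      ¬ (H.Reachable a u ↔ H.Reachable a v) := fun he hxy => by
    have huv' : ¬ H.Reachable u v := by
      rcases Sym2.eq_iff.mp he with ⟨rfl, rfl⟩ | ⟨rfl, rfl⟩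
      exacts [hxy, fun h => hxy h.symm]
    have := reachable_iff_not_reachable_of_forall_reachable_or hside huv'
    tauto
  simp only [Set.mem_ofPred_eq]
  by_cases h₁ : s(u, v) = s(a, b)
  · simpa [h₁, hne] using hcross h₁ hab'
  by_cases h₂ : s(u, v) = s(c, d)
  · simpa [h₂, Ne.symm hne] using hcross h₂ hcd'
  have hadj : H.Adj u v := by simp [H, huv, h₁, h₂]
  simp only [h₁, h₂, iff_true]
  exact ⟨fun h => h.trans hadj.reachable, fun h => h.trans hadj.symm.reachable⟩

end SimpleGraph

theorem ite_mul_ite_mul_ite {R : Type*} [Ring R] {p q r s : Prop} [Decidable p] [Decidable q]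
    [Decidable r] [Decidable s] (h : (p ↔ q) ↔ (r ↔ s)) :
    ((if p then 1 else -1 : R) * (if q then 1 else -1) * if r then 1 else -1) =
      if s then 1 else -1 := by
  by_cases p <;> by_cases q <;> by_cases r <;> by_cases s <;> simp_all

namespace EuclideanSpace

variable {ι : Type*} [DecidableEq ι]

theorem single_add_single_eq_smul_of_sym2_eq {i j i' j' : ι} (h : s(i, j) = s(i', j'))
    {t : ℝ} (ht : t = 1 ∨ t = -1) :
    ∃ σ : ℝ, (σ = 1 ∨ σ = -1) ∧
      single i 1 + single j t = σ • (single i' 1 + single j' t : EuclideanSpace ℝ ι) := by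
  rcases Sym2.eq_iff.mp h with ⟨rfl, rfl⟩ | ⟨rfl, rfl⟩
  · exact ⟨1, .inl rfl, (one_smul _ _).symm⟩
  · refine ⟨t, ht, ?_⟩
    rcases ht with rfl | rfl
    · rw [one_smul, add_comm]
    · simp only [neg_smul, one_smul, PiLp.single_neg]
      abel

theorem mul_single_add_single_apply {δ : ι → ℝ} {i : ι} (hδ : δ i * δ i = 1) (j : ι) (t : ℝ)
    (k : ι) :
    δ k * (single i 1 + single j t : EuclideanSpace ℝ ι) k =
      δ i * (single i 1 + single j (δ i * δ j * t) : EuclideanSpace ℝ ι) k := by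
  have h : δ i * (δ i * δ j * t) = δ j * t := by rw [← mul_assoc, ← mul_assoc, hδ, one_mul]
  simp only [PiLp.add_apply, PiLp.single_apply, mul_add, mul_ite, h]
  split_ifs <;> subst_vars <;> ring

theorem exists_sign_mul_single_add_single_apply {δ : ι → ℝ} (hδ : ∀ k, δ k = 1 ∨ δ k = -1)
    {i j i' j' : ι} (h : s(i, j) = s(i', j')) {t t' : ℝ} (ht' : t' = 1 ∨ t' = -1)
    (htt' : δ i * δ j * t = t') :
    ∃ ε : ℝ, (ε = 1 ∨ ε = -1) ∧ ∀ k, δ k * (single i 1 + single j t : EuclideanSpace ℝ ι) k =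
      ε * (single i' 1 + single j' t' : EuclideanSpace ℝ ι) k := by
  obtain ⟨σ, hσ, hsingle⟩ := single_add_single_eq_smul_of_sym2_eq h ht'
  have hδi : δ i * δ i = 1 := by rcases hδ i with h | h <;> simp [h]
  refine ⟨δ i * σ, by rcases hδ i with h | h <;> rcases hσ with h' | h' <;> simp [h, h'],
    fun k => ?_⟩
  rw [mul_single_add_single_apply hδi, htt', hsingle, PiLp.smul_apply, smul_eq_mul, mul_assoc]

theorem exists_eq_single_add_single_ite {G : SimpleGraph ι} {F : G.edgeSet → EuclideanSpace ℝ ι}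
    {a b : ι} (hab : s(a, b) ∈ G.edgeSet) (hF_ab : F ⟨s(a, b), hab⟩ = single a 1 + single b 1)
    (hF : ∀ e : G.edgeSet, (e : Sym2 ι) ≠ s(a, b) →
      ∃ i j : ι, (e : Sym2 ι) = s(i, j) ∧ F e = single i 1 - single j 1)
    (e : G.edgeSet) :
    ∃ i j : ι, (e : Sym2 ι) = s(i, j) ∧
      F e = single i 1 + single j (if (e : Sym2 ι) = s(a, b) then 1 else -1) := by
  by_cases he : (e : Sym2 ι) = s(a, b)
  · obtain rfl : e = ⟨s(a, b), hab⟩ := Subtype.ext he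
    exact ⟨a, b, rfl, by rw [hF_ab, if_pos rfl]⟩
  · obtain ⟨i, j, hij, hFe⟩ := hF e he
    exact ⟨i, j, hij, by simp only [hFe, if_neg he, sub_eq_add_neg, PiLp.single_neg]⟩

end EuclideanSpace

/-- The family of simplices obtained from a unicyclic graph does not depend on which
cycle edge is chosen to carry the vector `eᵢ + eⱼ`: if `{a, b}` and `{c, d}` are two
non-bridge edges of a connected graph `G` on `Fin n` with `n` edges, then the two
associated vector families agree, edge by edge, up to a diagonal isometry
`D(x)ᵢ = δᵢ xᵢ` and signs. -/
theorem Dn_choice_of_cycle_edge_irrelevant {n : ℕ}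
    (G : SimpleGraph (Fin n)) (hconn : G.Connected)
    (hcard : G.edgeSet.ncard = n)
    (a b c d : Fin n)
    (hab : s(a, b) ∈ G.edgeSet) (hcd : s(c, d) ∈ G.edgeSet)
    (hnb_ab : ¬ G.IsBridge s(a, b)) (hnb_cd : ¬ G.IsBridge s(c, d))
    (F₁ F₂ : G.edgeSet → EuclideanSpace ℝ (Fin n))
    (hF₁_ab : F₁ ⟨s(a, b), hab⟩ =
      EuclideanSpace.single a 1 + EuclideanSpace.single b 1)
    (hF₁ : ∀ e : G.edgeSet, (e : Sym2 (Fin n)) ≠ s(a, b) →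
      ∃ i j : Fin n, (e : Sym2 (Fin n)) = s(i, j) ∧
        F₁ e = EuclideanSpace.single i 1 - EuclideanSpace.single j 1)
    (hF₂_cd : F₂ ⟨s(c, d), hcd⟩ =
      EuclideanSpace.single c 1 + EuclideanSpace.single d 1)
    (hF₂ : ∀ e : G.edgeSet, (e : Sym2 (Fin n)) ≠ s(c, d) →
      ∃ i j : Fin n, (e : Sym2 (Fin n)) = s(i, j) ∧
        F₂ e = EuclideanSpace.single i 1 - EuclideanSpace.single j 1) :
    ∃ (δ : Fin n → ℝ) (ε : G.edgeSet → ℝ),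
      (∀ i, δ i = 1 ∨ δ i = -1) ∧ (∀ e, ε e = 1 ∨ ε e = -1) ∧
      ∀ (e : G.edgeSet) (i : Fin n), δ i * F₁ e i = ε e * F₂ e i := by
  classical
  obtain ⟨S, hS⟩ := hconn.exists_set_forall_adj_mem_iff_mem_iff
    (hcard.trans (Nat.card_fin n).symm) hab hcd hnb_ab hnb_cd
  set δ : Fin n → ℝ := fun k => if k ∈ S then 1 else -1
  have hδ : ∀ k, δ k = 1 ∨ δ k = -1 := fun k => by by_cases k ∈ S <;> simp [δ, *]
  have hε : ∀ e : G.edgeSet, ∃ ε : ℝ, (ε = 1 ∨ ε = -1) ∧ ∀ k, δ k * F₁ e k = ε * F₂ e k := by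
    intro e
    obtain ⟨i, j, hij, h₁⟩ := EuclideanSpace.exists_eq_single_add_single_ite hab hF₁_ab hF₁ e
    obtain ⟨i', j', hij', h₂⟩ := EuclideanSpace.exists_eq_single_add_single_ite hcd hF₂_cd hF₂ e
    rw [h₁, h₂]
    refine EuclideanSpace.exists_sign_mul_single_add_single_apply hδ (hij.symm.trans hij')
      (by split_ifs <;> simp) (ite_mul_ite_mul_ite ?_)
    have hadj : G.Adj i j := by rw [← G.mem_edgeSet, ← hij]; exact e.2
    rw [hij]
    exact hS i j hadj
  choose ε hε using hε
  exact ⟨δ, ε, hδ, fun e => (hε e).1, fun e => (hε e).2⟩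
end

section
/- Let f_1, …, f_{n+1} be a basis of EuclideanSpace ℝ (Fin (n+1)) consisting of unit vectors such that ⟪f_i, f_j⟫ ∈ {0, 1/2, −1/2} for all i ≠ j. Then the subgroup of linear isometries of EuclideanSpace ℝ (Fin (n+1)) generated by the reflections in f_1, …, f_{n+1} is finite. (Any spherical simplex whose dihedral angles belong to the set {π/2, π/3, 2π/3} generates a discrete reflection group.) -/
/-!
Since `2⟪fᵢ, fⱼ⟫ ∈ ℤ`, each reflection `x ↦ x - 2⟪fᵢ, x⟫ fᵢ` preserves the lattice
`ℤ f₁ + ⋯ + ℤ fₙ₊₁`.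
The group generated by the reflections therefore permutes the finitely many lattice vectors of norm
one; these include the `fᵢ`, so they span, and a linear map is determined by its action on them.
-/

open scoped RealInnerProductSpace

open Submodule

section Finiteness

variable {R E : Type*} [Semiring R] [SeminormedAddCommGroup E] [Module R E]

theorem LinearIsometryEquiv.finite_subgroup_of_mapsTo {G : Subgroup (E ≃ₗᵢ[R] E)} {S : Set E}
    (hS : S.Finite) (hspan : span R S = ⊤) (hG : ∀ g ∈ G, Set.MapsTo g S S) : Finite G := by
  have := hS.to_subtype
  refine Finite.of_injective (fun g : G => (hG g g.2).restrict) fun g g' hgg' => ?_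
  have hEq : Set.EqOn g.1 g'.1 S := fun x hx => congrArg Subtype.val (congrFun hgg' ⟨x, hx⟩)
  exact Subtype.ext <| LinearIsometryEquiv.toLinearEquiv_injective <|
    LinearEquiv.toLinearMap_injective <| LinearMap.ext_on hspan hEq

end Finiteness

lemma exists_int_eq_two_mul_inner {E ι : Type*} [NormedAddCommGroup E] [InnerProductSpace ℝ E]
    {f : ι → E} (hunit : ∀ i, ‖f i‖ = 1)
    (hangle : ∀ i j, i ≠ j → ⟪f i, f j⟫ ∈ ({0, 1 / 2, -(1 / 2)} : Set ℝ)) (i j : ι) :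
    ∃ k : ℤ, 2 * ⟪f i, f j⟫ = k := by
  rcases eq_or_ne i j with rfl | hij
  · exact ⟨2, by rw [real_inner_self_eq_norm_sq, hunit i]; norm_num⟩
  have h := hangle i j hij
  simp only [Set.mem_insert_iff, Set.mem_singleton_iff] at h
  rcases h with h | h | h <;> rw [h]
  exacts [⟨0, by norm_num⟩, ⟨1, by norm_num⟩, ⟨-1, by norm_num⟩]

section Reflection

variable {m : ℕ}

lemma reflIn_inv (v : EuclideanSpace ℝ (Fin m)) : (reflIn v)⁻¹ = reflIn v :=
  Submodule.reflection_inv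

lemma reflIn_apply_of_norm_eq_one {v : EuclideanSpace ℝ (Fin m)} (hv : ‖v‖ = 1)
    (x : EuclideanSpace ℝ (Fin m)) : reflIn v x = x - (2 * ⟪v, x⟫) • v := by
  rw [reflIn, Submodule.reflection_orthogonal_apply, Submodule.reflection_apply,
    Submodule.starProjection_singleton ℝ, hv]
  simp only [one_pow, Real.ringHom_apply, div_one, neg_sub, sub_right_inj]
  module

variable {ι : Type*} {f : ι → EuclideanSpace ℝ (Fin m)}

lemma mapsTo_reflIn_span_int {i : ι} (hi : ‖f i‖ = 1)
    (hint : ∀ j, ∃ k : ℤ, 2 * ⟪f i, f j⟫ = k) :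
    Set.MapsTo (reflIn (f i)) (span ℤ (Set.range f)) (span ℤ (Set.range f)) := by
  have hmap : (span ℤ (Set.range f)).map ((reflIn (f i)).toLinearMap.restrictScalars ℤ) ≤
      span ℤ (Set.range f) := by
    refine (map_span_le _ _ _).2 ?_
    rintro _ ⟨j, rfl⟩
    obtain ⟨k, hk⟩ := hint j
    have hrefl : reflIn (f i) (f j) = f j - k • f i := by
      rw [reflIn_apply_of_norm_eq_one hi, hk, Int.cast_smul_eq_zsmul]
    simp only [LinearMap.coe_restrictScalars, LinearEquiv.coe_coe,
      LinearIsometryEquiv.coe_toLinearEquiv, hrefl]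
    exact sub_mem (subset_span (Set.mem_range_self j))
      (zsmul_mem (subset_span (Set.mem_range_self i)) k)
  exact fun x hx => hmap ⟨x, hx, rfl⟩

lemma mapsTo_span_int_of_mem_closure_reflIn (hunit : ∀ i, ‖f i‖ = 1)
    (hint : ∀ i j, ∃ k : ℤ, 2 * ⟪f i, f j⟫ = k) {g : EuclideanSpace ℝ (Fin m) ≃ₗᵢ[ℝ] _}
    (hg : g ∈ Subgroup.closure (Set.range fun i => reflIn (f i))) :
    Set.MapsTo g (span ℤ (Set.range f)) (span ℤ (Set.range f)) := by
  induction hg using Subgroup.closure_induction'' with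
  | mem _ hx =>
    obtain ⟨i, rfl⟩ := hx
    exact mapsTo_reflIn_span_int (hunit i) (hint i)
  | inv_mem _ hx =>
    obtain ⟨i, rfl⟩ := hx
    rw [reflIn_inv]
    exact mapsTo_reflIn_span_int (hunit i) (hint i)
  | one => exact Set.mapsTo_id _
  | mul _ _ _ _ hx hy => exact hx.comp hy

end Reflection

/-- Any spherical simplex whose dihedral angles belong to `{π/2, π/3, 2π/3}` generates
a discrete (i.e. finite) reflection group: if the unit outward normals `f₁, …, f_{n+1}`
form a basis with pairwise inner products in `{0, 1/2, -1/2}`, then the group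
generated by the reflections in them is finite. -/
theorem finite_reflection_group_of_angles {n : ℕ}
    (f : Fin (n + 1) → EuclideanSpace ℝ (Fin (n + 1)))
    (hbasis : LinearIndependent ℝ f)
    (hspan : Submodule.span ℝ (Set.range f) = ⊤)
    (hunit : ∀ i, ‖f i‖ = 1)
    (hangle : ∀ i j, i ≠ j → ⟪f i, f j⟫ ∈ ({0, 1 / 2, -(1 / 2)} : Set ℝ)) :
    Finite ↥(Subgroup.closure (Set.range fun i => reflIn (f i))) := by
  have hlattice :
      span ℤ (Set.range f) = span ℤ (Set.range (Module.Basis.mk hbasis hspan.ge)) := by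
    rw [Module.Basis.coe_mk]
  refine LinearIsometryEquiv.finite_subgroup_of_mapsTo
    (S := Metric.sphere 0 1 ∩ span ℤ (Set.range f)) ?_ ?_ fun g hg => ?_
  · rw [hlattice]
    exact ZSpan.setFinite_inter _ Metric.isBounded_sphere
  · refine top_le_iff.1 (hspan ▸ span_mono ?_)
    rintro _ ⟨i, rfl⟩
    exact ⟨by simp [hunit i], subset_span ⟨i, rfl⟩⟩
  · have hint := exists_int_eq_two_mul_inner hunit hangle
    exact Set.MapsTo.inter_inter (fun x hx => by simpa using hx)
      (mapsTo_span_int_of_mem_closure_reflIn hunit hint hg)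
end
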